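/- arXiv:2306.00319 — 4 statements merged into one kernel-verified Lean document; each statement's English description precedes it below -/
import Mathlib

section
/- For every smooth function v : ℝ² → ℝ with compact support contained in the open upper half-plane ℝ²₊, and for each i ∈ {0,1,2}, one has ∫_{ℝ²₊} |v(x)|² ω_i(x)^{-1} dx ≤ 16 ∫_{ℝ²₊} |∇v(x)|² dx. -/
open MeasureTheory Filter Set
open scoped ENNReal Topology

noncomputable section

/-- The open upper half-plane `ℝ²₊`. -/
def UHP : Set (ℝ × ℝ) := {x | 0 < x.2}

/-- The Euclidean norm `|x|` of a point of `ℝ²`. -/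
def enorm2 (x : ℝ × ℝ) : ℝ := Real.sqrt (x.1 ^ 2 + x.2 ^ 2)

/-- The weights `ω₀, ω₁, ω₂` on the upper half-plane. -/
def wt : Fin 3 → ℝ × ℝ → ℝ := fun i x =>
  if i = 0 then x.2 ^ 2 * enorm2 x / (x.2 + 4 * enorm2 x)
  else if i = 1 then x.2 * enorm2 x
  else x.2 ^ 2 / 4

/-- The partial derivative `∂₁ f`. -/
def D1 (f : ℝ × ℝ → ℝ) (x : ℝ × ℝ) : ℝ := fderiv ℝ f x (1, 0)

/-- The partial derivative `∂₂ f`. -/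
def D2 (f : ℝ × ℝ → ℝ) (x : ℝ × ℝ) : ℝ := fderiv ℝ f x (0, 1)

/-- `|∇f|²`. -/
def gradSq (f : ℝ × ℝ → ℝ) (x : ℝ × ℝ) : ℝ := (D1 f x) ^ 2 + (D2 f x) ^ 2

/-- Smooth scalar functions compactly supported inside `D`. -/
def TestFun (D : Set (ℝ × ℝ)) (f : ℝ × ℝ → ℝ) : Prop :=
  ContDiff ℝ (⊤ : ℕ∞) f ∧ HasCompactSupport f ∧ tsupport f ⊆ D

/-- `C_{c,σ}^∞(D)`: smooth divergence-free vector fields compactly supported inside `D`. -/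
def TestVec (D : Set (ℝ × ℝ)) (v1 v2 : ℝ × ℝ → ℝ) : Prop :=
  TestFun D v1 ∧ TestFun D v2 ∧ ∀ x, D1 v1 x + D2 v2 x = 0

/-- `g` is the distributional gradient of `f` on the open set `D`. -/
def IsDistGrad (D : Set (ℝ × ℝ)) (f : ℝ × ℝ → ℝ) (g : ℝ × ℝ → ℝ × ℝ) : Prop :=
  ∀ φ : ℝ × ℝ → ℝ, TestFun D φ →
    ((∫ x in D, f x * D1 φ x) = -(∫ x in D, (g x).1 * φ x)) ∧
    ((∫ x in D, f x * D2 φ x) = -(∫ x in D, (g x).2 * φ x))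

/-- Membership `u = (u1,u2) ∈ Ḣ¹₀,σ(D)`, with `g1, g2` the distributional gradients of
`u1, u2`. -/
structure HSigma (D : Set (ℝ × ℝ)) (u1 u2 : ℝ × ℝ → ℝ) (g1 g2 : ℝ × ℝ → ℝ × ℝ) : Prop where
  locInt1 : LocallyIntegrableOn u1 D
  locInt2 : LocallyIntegrableOn u2 D
  distGrad1 : IsDistGrad D u1 g1
  distGrad2 : IsDistGrad D u2 g2
  gradL2 : IntegrableOn
    (fun x => (g1 x).1 ^ 2 + (g1 x).2 ^ 2 + (g2 x).1 ^ 2 + (g2 x).2 ^ 2) D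
  approx : ∃ w1 w2 : ℕ → ℝ × ℝ → ℝ, (∀ n, TestVec D (w1 n) (w2 n)) ∧
    Tendsto (fun n => ∫ x in D,
      ((D1 (w1 n) x - (g1 x).1) ^ 2 + (D2 (w1 n) x - (g1 x).2) ^ 2 +
       (D1 (w2 n) x - (g2 x).1) ^ 2 + (D2 (w2 n) x - (g2 x).2) ^ 2)) atTop (𝓝 0)

/-- `u` is a weak solution of the stationary Navier–Stokes system on `D` with forcing
`div F`, where `F` has rows `(F11, F12)` and `(F21, F22)` and `g1, g2` are the
distributional gradients of the components of `u`. -/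
def WeakSol (D : Set (ℝ × ℝ)) (F11 F12 F21 F22 u1 u2 : ℝ × ℝ → ℝ)
    (g1 g2 : ℝ × ℝ → ℝ × ℝ) : Prop :=
  ∀ φ1 φ2 : ℝ × ℝ → ℝ, TestVec D φ1 φ2 →
    (∫ x in D, ((g1 x).1 * D1 φ1 x + (g1 x).2 * D2 φ1 x +
                (g2 x).1 * D1 φ2 x + (g2 x).2 * D2 φ2 x +
                (u1 x * (g1 x).1 + u2 x * (g1 x).2) * φ1 x +
                (u1 x * (g2 x).1 + u2 x * (g2 x).2) * φ2 x)) =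
    ∫ x in D, (F11 x * D1 φ1 x + F12 x * D2 φ1 x + F21 x * D1 φ2 x + F22 x * D2 φ2 x)

/-- The energy inequality `∫ |∇u|² ≤ ∫ F·∇u`. -/
def EnergyIneq (D : Set (ℝ × ℝ)) (F11 F12 F21 F22 : ℝ × ℝ → ℝ)
    (g1 g2 : ℝ × ℝ → ℝ × ℝ) : Prop :=
  (∫ x in D, ((g1 x).1 ^ 2 + (g1 x).2 ^ 2 + (g2 x).1 ^ 2 + (g2 x).2 ^ 2)) ≤
    ∫ x in D, (F11 x * (g1 x).1 + F12 x * (g1 x).2 + F21 x * (g2 x).1 + F22 x * (g2 x).2)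

/-- `F ∈ L²(D)^{2×2}`. -/
def FL2 (D : Set (ℝ × ℝ)) (F11 F12 F21 F22 : ℝ × ℝ → ℝ) : Prop :=
  MemLp F11 2 (volume.restrict D) ∧ MemLp F12 2 (volume.restrict D) ∧
  MemLp F21 2 (volume.restrict D) ∧ MemLp F22 2 (volume.restrict D)

/-- The weighted norm `‖v‖_{L^∞(ℝ²₊, ω_i^{1/2})}`, valued in `ℝ≥0∞`. -/
def wLinf (i : Fin 3) (v1 v2 : ℝ × ℝ → ℝ) : ℝ≥0∞ :=
  essSup (fun x => ENNReal.ofReal (Real.sqrt (wt i x) * Real.sqrt (v1 x ^ 2 + v2 x ^ 2)))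
    (volume.restrict UHP)

/-- The square `‖v‖_X² = ∫₀^∞ x₂ ‖v(·,x₂)‖²_{L^∞(ℝ)} dx₂`, valued in `ℝ≥0∞`. -/
def XnormSq (v1 v2 : ℝ × ℝ → ℝ) : ℝ≥0∞ :=
  ∫⁻ t in Set.Ioi (0 : ℝ), ENNReal.ofReal t *
    (essSup (fun s => ENNReal.ofReal (Real.sqrt (v1 (s, t) ^ 2 + v2 (s, t) ^ 2))) volume) ^ 2

def B1 (x : ℝ × ℝ) : ℝ :=
  -(x.1 * (8 * enorm2 x - 3 * x.2)) / (2 * enorm2 x ^ 2 * (8 * enorm2 x - x.2))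

def B2 (x : ℝ × ℝ) : ℝ :=
  x.1 ^ 2 * (8 * enorm2 x - 3 * x.2) / (2 * x.2 * (enorm2 x ^ 2 * (8 * enorm2 x - x.2)))

lemma enorm2_sq (x : ℝ × ℝ) : enorm2 x ^ 2 = x.1 ^ 2 + x.2 ^ 2 :=
  Real.sq_sqrt (by positivity)

lemma le_enorm2 {x : ℝ × ℝ} (hx : 0 ≤ x.2) : x.2 ≤ enorm2 x := by
  have h := Real.sqrt_le_sqrt (show x.2 ^ 2 ≤ x.1 ^ 2 + x.2 ^ 2 by nlinarith)
  rwa [Real.sqrt_sq hx] at h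

lemma enorm2_pos {x : ℝ × ℝ} (hx : 0 < x.2) : 0 < enorm2 x :=
  lt_of_lt_of_le hx (le_enorm2 hx.le)

lemma contDiffAt_enorm2 {x : ℝ × ℝ} (hx : 0 < x.2) : ContDiffAt ℝ (⊤ : ℕ∞) enorm2 x := by
  have hne : x.1 ^ 2 + x.2 ^ 2 ≠ 0 := by nlinarith
  exact (Real.contDiffAt_sqrt hne).comp x
    (((contDiff_fst.pow 2).add (contDiff_snd.pow 2)).contDiffAt)

lemma contDiffAt_B1 {x : ℝ × ℝ} (hx : 0 < x.2) : ContDiffAt ℝ (⊤ : ℕ∞) B1 x := by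
  have hE : 0 < enorm2 x := enorm2_pos hx
  have hden : 2 * enorm2 x ^ 2 * (8 * enorm2 x - x.2) ≠ 0 := by
    have : 0 < 8 * enorm2 x - x.2 := by have := le_enorm2 hx.le; linarith
    positivity
  have hE' := contDiffAt_enorm2 hx
  exact (((contDiff_fst.contDiffAt).mul
      ((hE'.const_smul (8:ℝ)).sub ((contDiff_snd.contDiffAt).const_smul (3:ℝ)))).neg).div
    (((hE'.pow 2).const_smul (2:ℝ)).mul
      ((hE'.const_smul (8:ℝ)).sub (contDiff_snd.contDiffAt))) hden

lemma contDiffAt_B2 {x : ℝ × ℝ} (hx : 0 < x.2) : ContDiffAt ℝ (⊤ : ℕ∞) B2 x := by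
  have hE : 0 < enorm2 x := enorm2_pos hx
  have hden : 2 * x.2 * (enorm2 x ^ 2 * (8 * enorm2 x - x.2)) ≠ 0 := by
    have : 0 < 8 * enorm2 x - x.2 := by have := le_enorm2 hx.le; linarith
    positivity
  have hE' := contDiffAt_enorm2 hx
  exact (((contDiff_fst.pow 2).contDiffAt).mul
      ((hE'.const_smul (8:ℝ)).sub ((contDiff_snd.contDiffAt).const_smul (3:ℝ)))).div
    (((contDiff_snd.contDiffAt).const_smul (2:ℝ)).mul
      ((hE'.pow 2).mul ((hE'.const_smul (8:ℝ)).sub (contDiff_snd.contDiffAt)))) hden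

lemma key_ineq {x : ℝ × ℝ} (hx : x ∈ UHP) :
    D1 B1 x + D2 B2 x + B1 x ^ 2 + B2 x ^ 2
      + (x.2 + 4 * enorm2 x) / (16 * (x.2 ^ 2 * enorm2 x)) ≤ 0 := by
  have hb : 0 < x.2 := hx
  have hE : 0 < enorm2 x := enorm2_pos hb
  have hbE : x.2 ≤ enorm2 x := le_enorm2 hb.le
  have hsq : enorm2 x ^ 2 = x.1 ^ 2 + x.2 ^ 2 := enorm2_sq x
  have h8 : 0 < 8 * enorm2 x - x.2 := by linarith
  have hne : x.1 ^ 2 + x.2 ^ 2 ≠ 0 := by nlinarith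
  have hEne : enorm2 x ≠ 0 := hE.ne'
  have hbne : x.2 ≠ 0 := hb.ne'
  have h8ne : 8 * enorm2 x - x.2 ≠ 0 := h8.ne'
  -- slice derivatives of enorm2
  have he1 : HasDerivAt (fun t => enorm2 (t, x.2)) (x.1 / enorm2 x) x.1 := by
    have h0 : HasDerivAt (fun t : ℝ => t ^ 2 + x.2 ^ 2) (2 * x.1) x.1 := by
      simpa using (hasDerivAt_pow 2 x.1).add_const (x.2 ^ 2)
    have h1 := (Real.hasDerivAt_sqrt hne).comp x.1 h0
    refine h1.congr_deriv ?_
    rw [show enorm2 x = Real.sqrt (x.1 ^ 2 + x.2 ^ 2) from rfl]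
    field_simp
  have he2 : HasDerivAt (fun t => enorm2 (x.1, t)) (x.2 / enorm2 x) x.2 := by
    have h0 : HasDerivAt (fun t : ℝ => x.1 ^ 2 + t ^ 2) (2 * x.2) x.2 := by
      simpa using (hasDerivAt_pow 2 x.2).const_add (x.1 ^ 2)
    have h1 := (Real.hasDerivAt_sqrt hne).comp x.2 h0
    refine h1.congr_deriv ?_
    rw [show enorm2 x = Real.sqrt (x.1 ^ 2 + x.2 ^ 2) from rfl]
    field_simp
  -- D1 B1 via slices
  have hden1 : 2 * enorm2 x ^ 2 * (8 * enorm2 x - x.2) ≠ 0 := by positivity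
  have hden2 : 2 * x.2 * (enorm2 x ^ 2 * (8 * enorm2 x - x.2)) ≠ 0 := by positivity
  have hslice1 : HasDerivAt (fun t => B1 (t, x.2)) (D1 B1 x) x.1 := by
    have h := ((contDiffAt_B1 hb).differentiableAt (by simp)).hasFDerivAt.comp_hasDerivAt x.1
      (HasDerivAt.prodMk (hasDerivAt_id x.1) (hasDerivAt_const x.1 x.2))
    exact h
  have hslice2 : HasDerivAt (fun t => B2 (x.1, t)) (D2 B2 x) x.2 := by
    have h := ((contDiffAt_B2 hb).differentiableAt (by simp)).hasFDerivAt.comp_hasDerivAt x.2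
      (HasDerivAt.prodMk (hasDerivAt_const x.2 x.1) (hasDerivAt_id x.2))
    exact h
  have hcomb1 : HasDerivAt (fun t => B1 (t, x.2)) _ x.1 :=
    (((hasDerivAt_id x.1).mul ((he1.const_mul 8).sub_const (3 * x.2))).neg).div
      (((he1.pow 2).const_mul 2).mul ((he1.const_mul 8).sub_const x.2)) hden1
  have hcomb2 : HasDerivAt (fun t => B2 (x.1, t)) _ x.2 :=
    (((he2.const_mul 8).sub ((hasDerivAt_id x.2).const_mul 3)).const_mul (x.1 ^ 2)).div
      (((hasDerivAt_id x.2).const_mul 2).mul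
        ((he2.pow 2).mul ((he2.const_mul 8).sub (hasDerivAt_id x.2)))) hden2
  have e1 := hcomb1.unique hslice1
  have e2 := hcomb2.unique hslice2
  have hident : D1 B1 x + D2 B2 x + B1 x ^ 2 + B2 x ^ 2
      + (x.2 + 4 * enorm2 x) / (16 * (x.2 ^ 2 * enorm2 x)) =
      (-((8 * enorm2 x ^ 2 + 33 * x.2 * enorm2 x - 36 * x.2 ^ 2) *
          (x.2 * enorm2 x ^ 2 * (8 * enorm2 x - x.2))) +
        (256 * enorm2 x ^ 4 + 64 * x.2 * enorm2 x ^ 3 - 12 * x.2 ^ 2 * enorm2 x ^ 2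
          - 256 * x.1 ^ 2 * enorm2 x ^ 2 + 192 * x.1 ^ 2 * x.2 * enorm2 x
          - 36 * x.1 ^ 2 * x.2 ^ 2) * (enorm2 x ^ 2 - (x.1 ^ 2 + x.2 ^ 2))) /
      (16 * x.2 ^ 2 * enorm2 x ^ 4 * (8 * enorm2 x - x.2) ^ 2) := by
    rw [← e1, ← e2]
    simp only [B1, B2, Prod.mk.eta, id_eq, pow_one, Nat.cast_ofNat, mul_zero, sub_zero, Pi.mul_apply,
      Pi.pow_apply, Pi.neg_apply, Pi.sub_apply, id]
    field_simp
    ring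
  rw [hident, hsq]
  have hNum : 0 ≤ 8 * (x.1 ^ 2 + x.2 ^ 2) + 33 * x.2 * enorm2 x - 36 * x.2 ^ 2 := by nlinarith
  have hC : 0 ≤ x.2 * (x.1 ^ 2 + x.2 ^ 2) * (8 * enorm2 x - x.2) := by
    have h0 : (0:ℝ) ≤ x.1 ^ 2 + x.2 ^ 2 := by positivity
    exact mul_nonneg (mul_nonneg hb.le h0) h8.le
  apply div_nonpos_of_nonpos_of_nonneg
  · nlinarith [mul_nonneg hNum hC]
  · positivity

lemma fderiv_zero_of_nmem_tsupport {f : ℝ × ℝ → ℝ} {x : ℝ × ℝ}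
    (hx : x ∉ tsupport f) : fderiv ℝ f x = 0 := by
  by_contra h
  exact hx (support_fderiv_subset ℝ (by exact h))

lemma continuous_D1 {f : ℝ × ℝ → ℝ} (hf : ContDiff ℝ (⊤ : ℕ∞) f) : Continuous (D1 f) :=
  (ContinuousLinearMap.apply ℝ ℝ ((1:ℝ), (0:ℝ))).continuous.comp
    (hf.continuous_fderiv (by simp))

lemma continuous_D2 {f : ℝ × ℝ → ℝ} (hf : ContDiff ℝ (⊤ : ℕ∞) f) : Continuous (D2 f) :=
  (ContinuousLinearMap.apply ℝ ℝ ((0:ℝ), (1:ℝ))).continuous.comp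
    (hf.continuous_fderiv (by simp))

lemma hcs_D1 {f : ℝ × ℝ → ℝ} (hf : HasCompactSupport f) : HasCompactSupport (D1 f) :=
  hf.fderiv_apply ℝ ((1:ℝ), (0:ℝ))

lemma hcs_D2 {f : ℝ × ℝ → ℝ} (hf : HasCompactSupport f) : HasCompactSupport (D2 f) :=
  hf.fderiv_apply ℝ ((0:ℝ), (1:ℝ))

/-- 1D: integral of a compactly supported derivative vanishes. -/
lemma integral_slice_zero (g : ℝ → ℝ) (g' : ℝ → ℝ) (R : ℝ) (hR : 0 < R)
    (hgd : ∀ t, HasDerivAt g (g' t) t)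
    (hg'c : Continuous g')
    (h0 : ∀ t : ℝ, R < |t| → g t = 0) :
    (∫ t : ℝ, g' t) = 0 := by
  have hg'0 : ∀ t : ℝ, R < |t| → g' t = 0 := by
    intro t ht
    have hev : g =ᶠ[𝓝 t] fun _ => 0 := by
      have : IsOpen {s : ℝ | R < |s|} := isOpen_lt continuous_const (continuous_abs)
      filter_upwards [this.mem_nhds ht] with s hs
      exact h0 s hs
    have h1 : HasDerivAt g 0 t := by
      have := (hasDerivAt_const t (0:ℝ)).congr_of_eventuallyEq hev
      simpa using this
    exact (hgd t).unique h1
  have hle : -(R + 1) ≤ R + 1 := by linarith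
  rw [← setIntegral_eq_integral_of_forall_compl_eq_zero
    (s := Ioc (-(R+1)) (R+1)) (f := g')
    (by
      intro t ht
      apply hg'0
      simp only [mem_Ioc, not_and_or, not_lt, not_le] at ht
      rcases ht with h | h
      · rw [abs_of_nonpos (by linarith)]; linarith
      · rw [abs_of_pos (by linarith)]; linarith)]
  rw [← intervalIntegral.integral_of_le hle]
  have : (∫ t in (-(R+1))..(R+1), g' t) = g (R+1) - g (-(R+1)) :=
    intervalIntegral.integral_eq_sub_of_hasDerivAt
      (fun t _ => hgd t) (hg'c.intervalIntegrable _ _)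
  rw [this, h0 _ (by rw [abs_of_pos (by linarith)]; linarith),
    h0 _ (by rw [abs_of_nonpos (by linarith)]; linarith), sub_zero]

/-- divergence theorem on ℝ², first component. -/
lemma integral_D1_zero (f : ℝ × ℝ → ℝ) (hf : ContDiff ℝ (⊤ : ℕ∞) f)
    (hcs : HasCompactSupport f) : (∫ z : ℝ × ℝ, D1 f z) = 0 := by
  obtain ⟨R, hR⟩ := hcs.isBounded.subset_closedBall 0
  have hRR : ∀ z : ℝ × ℝ, z ∈ tsupport f → ‖z‖ ≤ R := by
    intro z hz
    have := hR hz
    simpa [Metric.mem_closedBall, dist_zero_right] using this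
  have hf0 : ∀ z : ℝ × ℝ, R < ‖z‖ → f z = 0 := by
    intro z hz
    by_contra h
    exact absurd (hRR z (subset_tsupport f h)) (by linarith)
  have hint : Integrable (D1 f) :=
    (continuous_D1 hf).integrable_of_hasCompactSupport (hcs_D1 hcs)
  rw [Measure.volume_eq_prod] at hint ⊢
  rw [integral_prod_symm _ hint]
  have : ∀ y : ℝ, (∫ x : ℝ, D1 f (x, y)) = 0 := by
    intro y
    apply integral_slice_zero (fun t => f (t, y)) _ (|R| + 1) (by positivity)
    · intro t
      exact ((hf.differentiable (by simp)) (t, y)).hasFDerivAt.comp_hasDerivAt t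
        (HasDerivAt.prodMk (hasDerivAt_id t) (hasDerivAt_const t y))
    · exact (continuous_D1 hf).comp (continuous_id.prodMk continuous_const)
    · intro t ht
      apply hf0
      calc R ≤ |R| := le_abs_self R
        _ < |R| + 1 := by linarith
        _ < |t| := ht
        _ = ‖(t, y).1‖ := rfl
        _ ≤ ‖(t, y)‖ := norm_fst_le _
  simp [this]

lemma integral_D2_zero (f : ℝ × ℝ → ℝ) (hf : ContDiff ℝ (⊤ : ℕ∞) f)
    (hcs : HasCompactSupport f) : (∫ z : ℝ × ℝ, D2 f z) = 0 := by
  obtain ⟨R, hR⟩ := hcs.isBounded.subset_closedBall 0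
  have hRR : ∀ z : ℝ × ℝ, z ∈ tsupport f → ‖z‖ ≤ R := by
    intro z hz
    have := hR hz
    simpa [Metric.mem_closedBall, dist_zero_right] using this
  have hf0 : ∀ z : ℝ × ℝ, R < ‖z‖ → f z = 0 := by
    intro z hz
    by_contra h
    exact absurd (hRR z (subset_tsupport f h)) (by linarith)
  have hint : Integrable (D2 f) :=
    (continuous_D2 hf).integrable_of_hasCompactSupport (hcs_D2 hcs)
  rw [Measure.volume_eq_prod] at hint ⊢
  rw [integral_prod _ hint]
  have : ∀ x : ℝ, (∫ y : ℝ, D2 f (x, y)) = 0 := by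
    intro x
    apply integral_slice_zero (fun t => f (x, t)) _ (|R| + 1) (by positivity)
    · intro t
      exact ((hf.differentiable (by simp)) (x, t)).hasFDerivAt.comp_hasDerivAt t
        (HasDerivAt.prodMk (hasDerivAt_const t x) (hasDerivAt_id t))
    · exact (continuous_D2 hf).comp (continuous_const.prodMk continuous_id)
    · intro t ht
      apply hf0
      calc R ≤ |R| := le_abs_self R
        _ < |R| + 1 := by linarith
        _ < |t| := ht
        _ = ‖(x, t).2‖ := rfl
        _ ≤ ‖(x, t)‖ := norm_snd_le _
  simp [this]

lemma UHP_open : IsOpen UHP := isOpen_lt continuous_const continuous_snd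

lemma continuous_enorm2 : Continuous enorm2 :=
  Real.continuous_sqrt.comp (by continuity)

lemma D1_mul {f g : ℝ × ℝ → ℝ} {x : ℝ × ℝ} (hf : DifferentiableAt ℝ f x)
    (hg : DifferentiableAt ℝ g x) :
    D1 (fun y => f y * g y) x = f x * D1 g x + g x * D1 f x := by
  unfold D1
  rw [fderiv_fun_mul hf hg]
  simp

lemma D2_mul {f g : ℝ × ℝ → ℝ} {x : ℝ × ℝ} (hf : DifferentiableAt ℝ f x)
    (hg : DifferentiableAt ℝ g x) :
    D2 (fun y => f y * g y) x = f x * D2 g x + g x * D2 f x := by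
  unfold D2
  rw [fderiv_fun_mul hf hg]
  simp

lemma wt_zero (x : ℝ × ℝ) : wt 0 x = x.2 ^ 2 * enorm2 x / (x.2 + 4 * enorm2 x) := by
  simp [wt]
lemma wt_one (x : ℝ × ℝ) : wt 1 x = x.2 * enorm2 x := by
  simp [wt]
lemma wt_two (x : ℝ × ℝ) : wt 2 x = x.2 ^ 2 / 4 := by
  simp [wt]

set_option maxHeartbeats 1000000 in
lemma hardy_main {v : ℝ × ℝ → ℝ} (hv : TestFun UHP v) (w : ℝ × ℝ → ℝ)
    (hw : ∀ x ∈ UHP, ContinuousAt w x) (hwp : ∀ x ∈ UHP, 0 < w x)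
    (hwle : ∀ x ∈ UHP, wt 0 x ≤ w x) :
    (∫ x in UHP, v x ^ 2 / w x) ≤ 16 * ∫ x in UHP, gradSq v x := by
  obtain ⟨hsm, hcs, hsupp⟩ := hv
  have hvd : Differentiable ℝ v := hsm.differentiable (by simp)
  set Ψ1 : ℝ × ℝ → ℝ := fun y => v y * v y * B1 y with hP1
  set Ψ2 : ℝ × ℝ → ℝ := fun y => v y * v y * B2 y with hP2
  -- smoothness of Ψ's
  have hpsism : ∀ B : ℝ × ℝ → ℝ, (∀ x, x ∈ UHP → ContDiffAt ℝ (⊤ : ℕ∞) B x) →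
      ContDiff ℝ (⊤ : ℕ∞) (fun y => v y * v y * B y) := by
    intro B hB
    rw [contDiff_iff_contDiffAt]
    intro y
    by_cases hy : y ∈ UHP
    · exact (hsm.contDiffAt.mul hsm.contDiffAt).mul (hB y hy)
    · have hyS : y ∉ tsupport v := fun h => hy (hsupp h)
      have hev : (fun z => v z * v z * B z) =ᶠ[𝓝 y] (fun _ => (0:ℝ)) := by
        filter_upwards [(isClosed_tsupport v).isOpen_compl.mem_nhds hyS] with z hz
        simp [image_eq_zero_of_notMem_tsupport hz]
      exact (contDiffAt_const (c := (0:ℝ))).congr_of_eventuallyEq hev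
  have hpsisupp : ∀ B : ℝ × ℝ → ℝ, Function.support (fun y => v y * v y * B y) ⊆ tsupport v := by
    intro B y hy
    refine subset_tsupport v ?_
    intro h0
    exact Function.mem_support.mp hy (by simp [h0])
  have hΨ1sm : ContDiff ℝ (⊤ : ℕ∞) Ψ1 := hpsism B1 (fun x hx => contDiffAt_B1 hx)
  have hΨ2sm : ContDiff ℝ (⊤ : ℕ∞) Ψ2 := hpsism B2 (fun x hx => contDiffAt_B2 hx)
  have hΨ1cs : HasCompactSupport Ψ1 := hcs.mono' (hpsisupp B1)
  have hΨ2cs : HasCompactSupport Ψ2 := hcs.mono' (hpsisupp B2)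
  -- pointwise inequality on UHP
  have hpt : ∀ x ∈ UHP, v x ^ 2 / w x ≤ 16 * gradSq v x - 16 * (D1 Ψ1 x + D2 Ψ2 x) := by
    intro x hx
    have hb : 0 < x.2 := hx
    have hE : 0 < enorm2 x := enorm2_pos hb
    have hbE : x.2 ≤ enorm2 x := le_enorm2 hb.le
    have hB1d : DifferentiableAt ℝ B1 x := (contDiffAt_B1 hb).differentiableAt (by simp)
    have hB2d : DifferentiableAt ℝ B2 x := (contDiffAt_B2 hb).differentiableAt (by simp)
    have hvvd : DifferentiableAt ℝ (fun y => v y * v y) x := (hvd x).mul (hvd x)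
    have h1 : D1 Ψ1 x = v x * v x * D1 B1 x + B1 x * (v x * D1 v x + v x * D1 v x) := by
      rw [hP1, D1_mul hvvd hB1d, D1_mul (hvd x) (hvd x)]
    have h2 : D2 Ψ2 x = v x * v x * D2 B2 x + B2 x * (v x * D2 v x + v x * D2 v x) := by
      rw [hP2, D2_mul hvvd hB2d, D2_mul (hvd x) (hvd x)]
    have hkey := key_ineq hx
    have hwt0pos : 0 < wt 0 x := by rw [wt_zero]; positivity
    have step1 : v x ^ 2 / w x ≤ v x ^ 2 / wt 0 x := by
      rw [div_le_div_iff₀ (hwp x hx) hwt0pos]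
      have := hwle x hx
      nlinarith [sq_nonneg (v x)]
    have step2 : v x ^ 2 / wt 0 x
        = 16 * (v x ^ 2 * ((x.2 + 4 * enorm2 x) / (16 * (x.2 ^ 2 * enorm2 x)))) := by
      rw [wt_zero]
      have h4 : (0:ℝ) < x.2 + 4 * enorm2 x := by positivity
      field_simp
    refine le_trans step1 ?_
    rw [step2, h1, h2]
    simp only [gradSq]
    nlinarith [sq_nonneg (D1 v x - v x * B1 x), sq_nonneg (D2 v x - v x * B2 x),
      mul_nonneg (sq_nonneg (v x)) (neg_nonneg.mpr hkey)]
  -- integrability of LHS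
  set G : ℝ × ℝ → ℝ := fun x => v x ^ 2 / w x with hGdef
  have hGcont : Continuous G := by
    rw [continuous_iff_continuousAt]
    intro y
    by_cases hy : y ∈ UHP
    · exact ((hsm.continuous.pow 2).continuousAt).div (hw y hy) (hwp y hy).ne'
    · have hyS : y ∉ tsupport v := fun h => hy (hsupp h)
      have hev : G =ᶠ[𝓝 y] (fun _ => (0:ℝ)) := by
        filter_upwards [(isClosed_tsupport v).isOpen_compl.mem_nhds hyS] with z hz
        simp [hGdef, image_eq_zero_of_notMem_tsupport hz]
      exact continuousAt_const.congr hev.symm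
  have hGcs : HasCompactSupport G := by
    apply hcs.mono'
    intro y hy
    refine subset_tsupport v ?_
    intro h0
    exact Function.mem_support.mp hy (by simp [hGdef, h0])
  have hGint : IntegrableOn G UHP :=
    (hGcont.integrable_of_hasCompactSupport hGcs).integrableOn
  -- integrability of RHS
  have hg1 : Continuous (gradSq v) := by
    have : gradSq v = fun x => (D1 v x) ^ 2 + (D2 v x) ^ 2 := rfl
    rw [this]
    exact ((continuous_D1 hsm).pow 2).add ((continuous_D2 hsm).pow 2)
  have hgcs : HasCompactSupport (gradSq v) := by
    apply hcs.mono'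
    intro y hy
    by_contra hyt
    apply Function.mem_support.mp hy
    have h0 : fderiv ℝ v y = 0 := fderiv_zero_of_nmem_tsupport hyt
    simp [gradSq, D1, D2, h0]
  have hgint : Integrable (gradSq v) := hg1.integrable_of_hasCompactSupport hgcs
  have hd1int : Integrable (D1 Ψ1) :=
    (continuous_D1 hΨ1sm).integrable_of_hasCompactSupport (hcs_D1 hΨ1cs)
  have hd2int : Integrable (D2 Ψ2) :=
    (continuous_D2 hΨ2sm).integrable_of_hasCompactSupport (hcs_D2 hΨ2cs)
  have hRHSint : IntegrableOn (fun x => 16 * gradSq v x - 16 * (D1 Ψ1 x + D2 Ψ2 x)) UHP :=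
    ((hgint.const_mul 16).sub ((hd1int.add hd2int).const_mul 16)).integrableOn
  have hdiv0 : ∀ x, x ∉ UHP → D1 Ψ1 x + D2 Ψ2 x = 0 := by
    intro x hx
    have ht1 : tsupport Ψ1 ⊆ tsupport v :=
      closure_minimal (hpsisupp B1) (isClosed_tsupport v)
    have ht2 : tsupport Ψ2 ⊆ tsupport v :=
      closure_minimal (hpsisupp B2) (isClosed_tsupport v)
    have hx1 : x ∉ tsupport Ψ1 := fun h => hx (hsupp (ht1 h))
    have hx2 : x ∉ tsupport Ψ2 := fun h => hx (hsupp (ht2 h))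
    simp [D1, D2, fderiv_zero_of_nmem_tsupport hx1, fderiv_zero_of_nmem_tsupport hx2]
  have hsum : Integrable (fun x => D1 Ψ1 x + D2 Ψ2 x) := hd1int.add hd2int
  have ha : IntegrableOn (fun x => 16 * gradSq v x) UHP :=
    (hgint.const_mul 16).integrableOn
  have hb : IntegrableOn (fun x => 16 * (D1 Ψ1 x + D2 Ψ2 x)) UHP :=
    (hsum.const_mul 16).integrableOn
  have c1 : (∫ x in UHP, v x ^ 2 / w x)
      ≤ ∫ x in UHP, (16 * gradSq v x - 16 * (D1 Ψ1 x + D2 Ψ2 x)) :=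
    setIntegral_mono_on hGint hRHSint UHP_open.measurableSet hpt
  have c2 : ∫ x in UHP, (16 * gradSq v x - 16 * (D1 Ψ1 x + D2 Ψ2 x))
      = 16 * (∫ x in UHP, gradSq v x) - 16 * ∫ x in UHP, (D1 Ψ1 x + D2 Ψ2 x) := by
    rw [integral_sub ha hb, integral_const_mul, integral_const_mul]
  have c3 : (∫ x in UHP, (D1 Ψ1 x + D2 Ψ2 x)) = 0 := by
    rw [setIntegral_eq_integral_of_forall_compl_eq_zero hdiv0]
    rw [integral_add hd1int hd2int, integral_D1_zero _ hΨ1sm hΨ1cs,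
      integral_D2_zero _ hΨ2sm hΨ2cs]
    simp
  rw [c2, c3, mul_zero, sub_zero] at c1
  exact c1


/-- Hardy's inequality with the weights `ω_i` on the upper half-plane. -/
theorem hardy_inequality (v : ℝ × ℝ → ℝ) (hv : TestFun UHP v) (i : Fin 3) :
    (∫ x in UHP, v x ^ 2 / wt i x) ≤ 16 * ∫ x in UHP, gradSq v x := by
  have hE : ∀ x : ℝ × ℝ, x ∈ UHP → (0:ℝ) < enorm2 x := fun x hx => enorm2_pos hx
  fin_cases i
  · refine hardy_main hv (wt 0) ?_ ?_ ?_
    · intro x hx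
      have hb : (0:ℝ) < x.2 := hx
      have h4 : (0:ℝ) < x.2 + 4 * enorm2 x := by
        have := hE x hx; positivity
      have : ContinuousAt (fun y : ℝ × ℝ => y.2 ^ 2 * enorm2 y / (y.2 + 4 * enorm2 y)) x :=
        ContinuousAt.div ((continuous_snd.pow 2).mul continuous_enorm2).continuousAt
          (continuous_snd.add (continuous_const.mul continuous_enorm2)).continuousAt h4.ne'
      exact this.congr (by filter_upwards with z using (wt_zero z).symm)
    · intro x hx
      rw [wt_zero]
      have hb : (0:ℝ) < x.2 := hx
      have := hE x hx
      positivity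
    · intro x _; exact le_refl _
  · refine hardy_main hv (wt 1) ?_ ?_ ?_
    · intro x hx
      have : ContinuousAt (fun y : ℝ × ℝ => y.2 * enorm2 y) x :=
        (continuous_snd.mul continuous_enorm2).continuousAt
      exact this.congr (by filter_upwards with z using (wt_one z).symm)
    · intro x hx
      rw [wt_one]
      have hb : (0:ℝ) < x.2 := hx
      have := hE x hx
      positivity
    · intro x hx
      rw [wt_zero, wt_one]
      have hb : (0:ℝ) < x.2 := hx
      have hEx := hE x hx
      rw [div_le_iff₀ (by positivity)]
      nlinarith [mul_pos (mul_pos hb hEx) hEx]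
  · refine hardy_main hv (wt 2) ?_ ?_ ?_
    · intro x hx
      have : ContinuousAt (fun y : ℝ × ℝ => y.2 ^ 2 / 4) x :=
        ((continuous_snd.pow 2).div_const 4).continuousAt
      exact this.congr (by filter_upwards with z using (wt_two z).symm)
    · intro x hx
      rw [wt_two]
      have hb : (0:ℝ) < x.2 := hx
      positivity
    · intro x hx
      rw [wt_zero, wt_two]
      have hb : (0:ℝ) < x.2 := hx
      have hEx := hE x hx
      have hbE := le_enorm2 hb.le
      rw [div_le_div_iff₀ (by positivity) (by norm_num)]
      nlinarith

end
end

section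
/- For every smooth function v : ℝ² → ℝ with compact support contained in ℝ²₊ and every x₂ > 0, ∫_ℝ |v(x₁,x₂)|² dx₁ ≤ x₂ ∫_{ℝ²₊} |∇v(x)|² dx. -/
open MeasureTheory Filter Set
open scoped ENNReal Topology

noncomputable section

lemma sq_integral_le_aux {α : Type*} [MeasurableSpace α] (μ : Measure α) [IsFiniteMeasure μ]
    (f : α → ℝ) (hf : MemLp f 2 μ) :
    (∫ a, f a ∂μ) ^ 2 ≤ (μ Set.univ).toReal * ∫ a, f a ^ 2 ∂μ := by
  have hpq : Real.HolderConjugate 2 2 := Real.HolderConjugate.two_two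
  have hf2 : MemLp (fun a => |f a|) (ENNReal.ofReal 2) μ := by
    simpa [Pi.abs_def] using hf.abs
  have hones : MemLp (fun _ : α => (1:ℝ)) (ENNReal.ofReal 2) μ := by
    simpa using memLp_const (μ := μ) (1:ℝ)
  have h := integral_mul_le_Lp_mul_Lq_of_nonneg hpq
    (Filter.Eventually.of_forall fun a => abs_nonneg (f a))
    (Filter.Eventually.of_forall fun _ => zero_le_one) hf2 hones
  simp only [mul_one, Real.one_rpow, integral_const, smul_eq_mul] at h
  have habs : |∫ a, f a ∂μ| ≤ ∫ a, |f a| ∂μ := by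
    simpa using norm_integral_le_integral_norm (μ := μ) f
  have hA : ∫ a, |f a| ^ (2:ℝ) ∂μ = ∫ a, f a ^ 2 ∂μ := by
    refine integral_congr_ae (Filter.Eventually.of_forall fun a => ?_)
    have : |f a| ^ (2:ℝ) = |f a| ^ (2:ℕ) := by
      rw [← Real.rpow_natCast]; norm_num
    simpa [this] using sq_abs (f a)
  rw [hA] at h
  have hAnn : 0 ≤ ∫ a, f a ^ 2 ∂μ := integral_nonneg fun a => sq_nonneg _
  have hBnn : (0:ℝ) ≤ (μ Set.univ).toReal := ENNReal.toReal_nonneg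
  calc (∫ a, f a ∂μ) ^ 2 = |∫ a, f a ∂μ| ^ 2 := (sq_abs _).symm
    _ ≤ (∫ a, |f a| ∂μ) ^ 2 := pow_le_pow_left₀ (abs_nonneg _) habs 2
    _ ≤ ((∫ a, f a ^ 2 ∂μ) ^ (1/2:ℝ) * (μ Set.univ).toReal ^ (1/2:ℝ)) ^ 2 :=
        pow_le_pow_left₀ (integral_nonneg fun a => abs_nonneg _) h 2
    _ = (μ Set.univ).toReal * ∫ a, f a ^ 2 ∂μ := by
        rw [mul_pow, ← Real.rpow_natCast ((∫ a, f a ^ 2 ∂μ) ^ (1/2:ℝ)) 2,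
          ← Real.rpow_natCast ((μ Set.univ).toReal ^ (1/2:ℝ)) 2,
          ← Real.rpow_mul hAnn, ← Real.rpow_mul hBnn]
        norm_num [mul_comm]

/-- Trace-type inequality for horizontal slices. -/
theorem trace_horizontal_slice (v : ℝ × ℝ → ℝ) (hv : TestFun UHP v)
    (x₂ : ℝ) (hx₂ : 0 < x₂) :
    (∫ x₁ : ℝ, v (x₁, x₂) ^ 2) ≤ x₂ * ∫ x in UHP, gradSq v x := by
  obtain ⟨hsm, hcs, hsupp⟩ := hv
  have hvc : Continuous v := hsm.continuous
  have hdvc : Continuous (fun x => fderiv ℝ v x) := ((hsm.fderiv_right (m := (⊤ : ℕ∞)) (by simp)).continuous)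
  set g : ℝ × ℝ → ℝ := fun x => fderiv ℝ v x (0, 1) with hg_def
  have hgc : Continuous g := hdvc.clm_apply continuous_const
  have hgcs : HasCompactSupport g := hcs.fderiv_apply ℝ (0, 1)
  have hG : Continuous (fun x : ℝ × ℝ => g x ^ 2) := hgc.pow 2
  have hGcs : HasCompactSupport (fun x : ℝ × ℝ => g x ^ 2) :=
    hgcs.comp_left (g := fun y : ℝ => y ^ 2) (by norm_num)
  have hGint : Integrable (fun x : ℝ × ℝ => g x ^ 2) volume :=
    hG.integrable_of_hasCompactSupport hGcs
  -- the D1 part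
  have hd1c : Continuous (D1 v) := hdvc.clm_apply continuous_const
  have hd1cs : HasCompactSupport (D1 v) := hcs.fderiv_apply ℝ (1, 0)
  have hgradc : Continuous (gradSq v) := (hd1c.pow 2).add (hgc.pow 2)
  have hgradcs : HasCompactSupport (gradSq v) := by
    have h1 : HasCompactSupport (fun x : ℝ × ℝ => D1 v x ^ 2) :=
      hd1cs.comp_left (g := fun y : ℝ => y ^ 2) (by norm_num)
    exact h1.add hGcs
  have hgradint : Integrable (gradSq v) volume :=
    hgradc.integrable_of_hasCompactSupport hgradcs
  -- FTC in the vertical direction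
  have key : ∀ x₁ : ℝ, v (x₁, x₂) = ∫ t in Set.Ioc (0:ℝ) x₂, g (x₁, t) := by
    intro x₁
    have hder : ∀ t ∈ Set.uIcc (0:ℝ) x₂, HasDerivAt (fun t => v (x₁, t)) (g (x₁, t)) t := by
      intro t _
      have h1 : HasDerivAt (fun t : ℝ => ((x₁, t) : ℝ × ℝ)) ((0:ℝ), (1:ℝ)) t :=
        (hasDerivAt_const t x₁).prodMk (hasDerivAt_id t)
      exact (hsm.differentiable (by simp) (x₁, t)).hasFDerivAt.comp_hasDerivAt t h1
    have hint : IntervalIntegrable (fun t => g (x₁, t)) volume 0 x₂ :=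
      (hgc.comp (continuous_const.prodMk continuous_id)).intervalIntegrable 0 x₂
    have hFTC := intervalIntegral.integral_eq_sub_of_hasDerivAt hder hint
    have h0 : v (x₁, 0) = 0 := by
      apply image_eq_zero_of_notMem_tsupport
      intro h
      exact lt_irrefl (0:ℝ) (hsupp h)
    rw [h0, sub_zero] at hFTC
    rw [← hFTC, intervalIntegral.integral_of_le hx₂.le]
  -- pointwise Cauchy–Schwarz bound
  have hpt : ∀ x₁ : ℝ, v (x₁, x₂) ^ 2 ≤ x₂ * ∫ t in Set.Ioc (0:ℝ) x₂, g (x₁, t) ^ 2 := by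
    intro x₁
    have hc : Continuous fun t => g (x₁, t) := hgc.comp (continuous_const.prodMk continuous_id)
    obtain ⟨C, hC⟩ := hgcs.exists_bound_of_continuous hgc
    have hmem : MemLp (fun t => g (x₁, t)) 2 (volume.restrict (Set.Ioc (0:ℝ) x₂)) := by
      refine (memLp_top_of_bound hc.aestronglyMeasurable.restrict C
        (Filter.Eventually.of_forall fun t => hC (x₁, t))).mono_exponent le_top
    have hCS := sq_integral_le_aux (volume.restrict (Set.Ioc (0:ℝ) x₂)) _ hmem
    have hμ : ((volume.restrict (Set.Ioc (0:ℝ) x₂)) Set.univ).toReal = x₂ := by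
      simp [Real.volume_Ioc, ENNReal.toReal_ofReal hx₂.le]
    rw [key x₁]
    calc (∫ t in Set.Ioc (0:ℝ) x₂, g (x₁, t)) ^ 2
        ≤ ((volume.restrict (Set.Ioc (0:ℝ) x₂)) Set.univ).toReal *
          ∫ t in Set.Ioc (0:ℝ) x₂, g (x₁, t) ^ 2 := hCS
      _ = x₂ * ∫ t in Set.Ioc (0:ℝ) x₂, g (x₁, t) ^ 2 := by rw [hμ]
  -- integrability of both sides in x₁
  have hLHSint : Integrable (fun x₁ : ℝ => v (x₁, x₂) ^ 2) volume := by
    have hc : Continuous fun x₁ : ℝ => v (x₁, x₂) ^ 2 :=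
      (hvc.comp (continuous_id.prodMk continuous_const)).pow 2
    refine hc.integrable_of_hasCompactSupport ?_
    refine HasCompactSupport.intro (hcs.image continuous_fst) ?_
    intro x₁ hx₁
    by_contra hne
    have : v (x₁, x₂) ≠ 0 := fun h => hne (by simp [h])
    exact hx₁ ⟨(x₁, x₂), subset_tsupport v this, rfl⟩
  have hmeq : (volume : Measure ℝ).prod (volume.restrict (Set.Ioc (0:ℝ) x₂)) =
      (volume : Measure (ℝ × ℝ)).restrict (Set.univ ×ˢ Set.Ioc (0:ℝ) x₂) := by
    rw [show (volume : Measure (ℝ × ℝ)) = (volume : Measure ℝ).prod (volume : Measure ℝ) from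
      Measure.volume_eq_prod _ _, ← Measure.prod_restrict, Measure.restrict_univ]
  have hprodInt : Integrable (fun x : ℝ × ℝ => g x ^ 2)
      ((volume : Measure ℝ).prod (volume.restrict (Set.Ioc (0:ℝ) x₂))) := by
    rw [hmeq]
    exact hGint.restrict
  have hRHSint : Integrable (fun x₁ : ℝ => ∫ t in Set.Ioc (0:ℝ) x₂, g (x₁, t) ^ 2) volume :=
    hprodInt.integral_prod_left
  -- main chain
  have step1 : (∫ x₁ : ℝ, v (x₁, x₂) ^ 2) ≤
      ∫ x₁ : ℝ, x₂ * ∫ t in Set.Ioc (0:ℝ) x₂, g (x₁, t) ^ 2 :=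
    integral_mono hLHSint (hRHSint.const_mul x₂) hpt
  have step2 : (∫ x₁ : ℝ, x₂ * ∫ t in Set.Ioc (0:ℝ) x₂, g (x₁, t) ^ 2) =
      x₂ * ∫ x in Set.univ ×ˢ Set.Ioc (0:ℝ) x₂, g x ^ 2 := by
    rw [integral_const_mul]
    congr 1
    rw [MeasureTheory.integral_integral hprodInt]
    rw [hmeq]
  have step3 : (∫ x in Set.univ ×ˢ Set.Ioc (0:ℝ) x₂, g x ^ 2) ≤ ∫ x in UHP, g x ^ 2 := by
    refine setIntegral_mono_set hGint.integrableOn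
      (Filter.Eventually.of_forall fun x => sq_nonneg _) ?_
    refine HasSubset.Subset.eventuallyLE ?_
    rintro ⟨a, b⟩ ⟨-, hb⟩
    exact hb.1
  have step4 : (∫ x in UHP, g x ^ 2) ≤ ∫ x in UHP, gradSq v x := by
    refine integral_mono hGint.integrableOn hgradint.integrableOn fun x => ?_
    have : gradSq v x = D1 v x ^ 2 + g x ^ 2 := rfl
    rw [this]
    nlinarith [sq_nonneg (D1 v x)]
  calc (∫ x₁ : ℝ, v (x₁, x₂) ^ 2)
      ≤ ∫ x₁ : ℝ, x₂ * ∫ t in Set.Ioc (0:ℝ) x₂, g (x₁, t) ^ 2 := step1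
    _ = x₂ * ∫ x in Set.univ ×ˢ Set.Ioc (0:ℝ) x₂, g x ^ 2 := step2
    _ ≤ x₂ * ∫ x in UHP, g x ^ 2 := mul_le_mul_of_nonneg_left step3 hx₂.le
    _ ≤ x₂ * ∫ x in UHP, gradSq v x := mul_le_mul_of_nonneg_left step4 hx₂.le


end
end

section
/- There exists a constant N > 0 such that for all a > 0, b > 0 and every v = (v₁,v₂) ∈ C_{c,σ}^∞(ℝ²₊), if ψ(x₁,x₂) = −∫₀^{x₂} v₁(x₁,s) ds, then (∫_{−a}^{a} ∫₀^{b} |ψ(x₁,x₂)|² x₂^{−3} dx₂ dx₁)^{1/2} ≤ N b^{1/2} (∫_{−a}^{a} ∫₀^{b} |v(x₁,x₂)|² x₂^{−2} dx₂ dx₁)^{1/2}. -/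
open MeasureTheory Filter Set
open scoped ENNReal Topology

noncomputable section

open intervalIntegral in
lemma cs_interval (u : ℝ → ℝ) (hu : Continuous u) (x₂ : ℝ) (hx : 0 < x₂) :
    (∫ s in (0:ℝ)..x₂, u s * s) ^ 2 ≤ (∫ s in (0:ℝ)..x₂, (u s) ^ 2) * (x₂ ^ 3 / 3) := by
  set A := ∫ s in (0:ℝ)..x₂, (u s) ^ 2 with hA
  set B := ∫ s in (0:ℝ)..x₂, u s * s with hB
  have hC : (∫ s in (0:ℝ)..x₂, s ^ 2) = x₂ ^ 3 / 3 := by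
    rw [integral_pow (a := (0:ℝ)) (b := x₂) (n := 2)]; norm_num
  set C : ℝ := x₂ ^ 3 / 3 with hCdef
  have hCpos : 0 < C := by positivity
  set lam : ℝ := B / C with hlam
  have key : 0 ≤ A - 2 * lam * B + lam ^ 2 * C := by
    have h1 : (0:ℝ) ≤ ∫ s in (0:ℝ)..x₂, (u s - lam * s) ^ 2 :=
      integral_nonneg hx.le (fun s _ => sq_nonneg _)
    have h2 : (∫ s in (0:ℝ)..x₂, (u s - lam * s) ^ 2)
        = A - 2 * lam * B + lam ^ 2 * C := by
      have e : ∀ s : ℝ, (u s - lam * s) ^ 2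
          = (u s) ^ 2 - 2 * lam * (u s * s) + lam ^ 2 * s ^ 2 := by intro s; ring
      rw [integral_congr (g := fun s => (u s) ^ 2 - 2 * lam * (u s * s) + lam ^ 2 * s ^ 2)
        (fun s _ => e s)]
      rw [intervalIntegral.integral_add, intervalIntegral.integral_sub,
        intervalIntegral.integral_const_mul, intervalIntegral.integral_const_mul, hC]
      · exact (hu.pow 2).intervalIntegrable _ _
      · exact (continuous_const.mul (hu.mul continuous_id)).intervalIntegrable _ _
      · exact ((hu.pow 2).sub (continuous_const.mul (hu.mul continuous_id))).intervalIntegrable _ _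
      · exact (continuous_const.mul (continuous_id.pow 2)).intervalIntegrable _ _
    linarith [h1, h2.le, h2.ge]
  have h3 : A - 2 * lam * B + lam ^ 2 * C = A - B ^ 2 / C := by
    rw [hlam]; linear_combination (B ^ 2 * C⁻¹) * mul_inv_cancel₀ hCpos.ne'
  have h4 : B ^ 2 / C ≤ A := by linarith [key, h3]
  calc B ^ 2 = B ^ 2 / C * C := by field_simp
  _ ≤ A * C := by exact mul_le_mul_of_nonneg_right h4 hCpos.le

lemma cont_div {F : ℝ × ℝ → ℝ} (hF : Continuous F) (n : ℕ) {ε : ℝ} (hε : 0 < ε)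
    (h0 : ∀ x : ℝ × ℝ, x.2 ≤ ε → F x = 0) :
    Continuous (fun x : ℝ × ℝ => F x / x.2 ^ n) := by
  rw [continuous_iff_continuousAt]
  intro x
  by_cases hx : x.2 = 0
  · have hnb : {y : ℝ × ℝ | y.2 < ε} ∈ 𝓝 x := by
      have : IsOpen {y : ℝ × ℝ | y.2 < ε} := isOpen_lt continuous_snd continuous_const
      exact this.mem_nhds (by simp [hx, hε])
    have heq : (fun y : ℝ × ℝ => F y / y.2 ^ n) =ᶠ[𝓝 x] fun _ => (0:ℝ) := by
      filter_upwards [hnb] with y hy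
      simp [h0 y hy.le]
    exact (continuousAt_const).congr heq.symm
  · exact (hF.continuousAt).div ((continuous_snd.pow n).continuousAt) (pow_ne_zero n hx)

lemma testfun_eps {f : ℝ × ℝ → ℝ} (hc : HasCompactSupport f)
    (hs : tsupport f ⊆ {x : ℝ × ℝ | 0 < x.2}) :
    ∃ ε : ℝ, 0 < ε ∧ ∀ x : ℝ × ℝ, x.2 ≤ ε → f x = 0 := by
  by_cases hne : (tsupport f).Nonempty
  · obtain ⟨x₀, hx₀, hmin⟩ := hc.exists_isMinOn hne (continuous_snd.continuousOn)
    have hx₀pos : 0 < x₀.2 := hs hx₀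
    refine ⟨x₀.2 / 2, by linarith, fun x hx => ?_⟩
    by_contra hfx
    have hmem : x ∈ tsupport f := subset_tsupport f hfx
    have h5 : x₀.2 ≤ x.2 := hmin hmem
    linarith
  · refine ⟨1, one_pos, fun x _ => ?_⟩
    have : x ∉ tsupport f := fun h => hne ⟨x, h⟩
    exact image_eq_zero_of_notMem_tsupport this

lemma integral_eq_zero_of_low {f : ℝ × ℝ → ℝ} {ε : ℝ} (hε : 0 < ε)
    (h0 : ∀ x : ℝ × ℝ, x.2 ≤ ε → f x = 0) (x₁ t : ℝ) (ht : t ≤ ε) :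
    (∫ s in (0:ℝ)..t, f (x₁, s)) = 0 := by
  rw [intervalIntegral.integral_congr (g := fun _ => (0:ℝ))]
  · simp
  · intro s hs
    have hs' : s ≤ max 0 t := (Set.mem_uIcc.mp ?_).elim (fun h => le_max_of_le_right h.2)
      (fun h => le_max_of_le_left h.2)
    · exact h0 (x₁, s) (le_trans hs' (max_le hε.le ht))
    · simpa [Set.uIcc] using hs

open intervalIntegral in
lemma cont_streamInt {f : ℝ × ℝ → ℝ} (hf : Continuous f) {ε : ℝ} (hε : 0 < ε)
    (h0 : ∀ x : ℝ × ℝ, x.2 ≤ ε → f x = 0) :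
    Continuous (fun x : ℝ × ℝ => (-(∫ s in (0:ℝ)..x.2, f (x.1, s))) ^ 2 / x.2 ^ 3) := by
  have hF : Continuous (fun x : ℝ × ℝ => (-(∫ s in (0:ℝ)..x.2, f (x.1, s))) ^ 2) := by
    have h1 : Continuous (fun x : ℝ × ℝ => ∫ s in (0:ℝ)..x.2, f (x.1, s)) := by
      apply continuous_parametric_intervalIntegral_of_continuous
        (f := fun (x : ℝ × ℝ) (t : ℝ) => f (x.1, t)) (μ := volume)
      · exact hf.comp ((continuous_fst.fst).prodMk continuous_snd)
      · exact continuous_snd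
    exact (h1.neg).pow 2
  exact cont_div hF 3 hε (fun x hx => by
    rw [integral_eq_zero_of_low hε h0 x.1 x.2 hx]; simp)

lemma cont_quot {f g : ℝ × ℝ → ℝ} (hf : Continuous f) (hg : Continuous g) {ε : ℝ}
    (hε : 0 < ε) (hf0 : ∀ x : ℝ × ℝ, x.2 ≤ ε → f x = 0)
    (hg0 : ∀ x : ℝ × ℝ, x.2 ≤ ε → g x = 0) :
    Continuous (fun x : ℝ × ℝ => (f x ^ 2 + g x ^ 2) / x.2 ^ 2) :=
  cont_div ((hf.pow 2).add (hg.pow 2)) 2 hε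
    (fun x hx => by simp only [Pi.add_apply, Pi.pow_apply]; rw [hf0 x hx, hg0 x hx]; simp)

lemma inner_bound {f g : ℝ × ℝ → ℝ} (hf : Continuous f) (hg : Continuous g) {ε : ℝ}
    (hε : 0 < ε) (hf0 : ∀ x : ℝ × ℝ, x.2 ≤ ε → f x = 0)
    (hg0 : ∀ x : ℝ × ℝ, x.2 ≤ ε → g x = 0) {b : ℝ} (hb : 0 < b) (x₁ : ℝ) :
    (∫ x₂ in (0:ℝ)..b, (-(∫ s in (0:ℝ)..x₂, f (x₁, s))) ^ 2 / x₂ ^ 3)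
      ≤ b * ∫ x₂ in (0:ℝ)..b, (f (x₁, x₂) ^ 2 + g (x₁, x₂) ^ 2) / x₂ ^ 2 := by
  set G := ∫ x₂ in (0:ℝ)..b, (f (x₁, x₂) ^ 2 + g (x₁, x₂) ^ 2) / x₂ ^ 2 with hGdef
  have hGnn : 0 ≤ G := intervalIntegral.integral_nonneg hb.le (fun s _ => by positivity)
  set p : ℝ → ℝ := fun s => f (x₁, s) / s with hpdef
  have hp : Continuous p := by
    have h1 := (cont_div hf 1 hε hf0).comp (Continuous.prodMk_right x₁)
    simpa [hpdef, Function.comp_def] using h1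
  have hfp : ∀ s : ℝ, f (x₁, s) = p s * s := by
    intro s
    by_cases hs : s = 0
    · simp [hpdef, hs, hf0 (x₁, 0) (by simpa using hε.le)]
    · simp [hpdef, div_mul_cancel₀ _ hs]
  have hq : Continuous (fun s : ℝ => (f (x₁, s) ^ 2 + g (x₁, s) ^ 2) / s ^ 2) := by
    have h1 := (cont_quot hf hg hε hf0 hg0).comp (Continuous.prodMk_right x₁)
    exact h1
  have hPb : (∫ s in (0:ℝ)..b, p s ^ 2) ≤ G := by
    apply intervalIntegral.integral_mono_on hb.le
      ((hp.pow 2).intervalIntegrable _ _) (hq.intervalIntegrable _ _)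
    intro s hs
    by_cases h0 : s = 0
    · simp [hpdef, h0]
    · have hs2 : (0:ℝ) < s ^ 2 := by positivity
      have : p s ^ 2 = f (x₁, s) ^ 2 / s ^ 2 := by rw [hpdef]; rw [div_pow]
      rw [Pi.pow_apply, this]
      exact div_le_div_of_nonneg_right (by nlinarith [sq_nonneg (g (x₁, s))]) hs2.le
  have hpt : ∀ x₂ ∈ Set.Icc (0:ℝ) b,
      (-(∫ s in (0:ℝ)..x₂, f (x₁, s))) ^ 2 / x₂ ^ 3 ≤ G := by
    intro x₂ hx₂
    rcases eq_or_lt_of_le hx₂.1 with h | h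
    · simp [← h, hGnn]
    · have hpsi : (∫ s in (0:ℝ)..x₂, f (x₁, s)) = ∫ s in (0:ℝ)..x₂, p s * s :=
        intervalIntegral.integral_congr (fun s _ => hfp s)
      have hcs := cs_interval p hp x₂ h
      have hsub : (∫ s in (0:ℝ)..x₂, p s ^ 2) ≤ ∫ s in (0:ℝ)..b, p s ^ 2 := by
        rw [← intervalIntegral.integral_add_adjacent_intervals (a := (0:ℝ)) (b := x₂) (c := b)
          ((show Continuous (fun s => p s ^ 2) from hp.pow 2).intervalIntegrable _ _)
          ((show Continuous (fun s => p s ^ 2) from hp.pow 2).intervalIntegrable _ _)]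
        have : (0:ℝ) ≤ ∫ s in x₂..b, p s ^ 2 :=
          intervalIntegral.integral_nonneg hx₂.2 (fun s _ => sq_nonneg _)
        linarith
      have h1 : (∫ s in (0:ℝ)..x₂, p s ^ 2) ≤ G := hsub.trans hPb
      have hx3 : (0:ℝ) < x₂ ^ 3 := by positivity
      rw [div_le_iff₀ hx3]
      have hns : (-(∫ s in (0:ℝ)..x₂, f (x₁, s))) ^ 2
          = (∫ s in (0:ℝ)..x₂, p s * s) ^ 2 := by rw [hpsi]; ring
      rw [hns]
      have h2 := mul_le_mul_of_nonneg_right h1 (by positivity : (0:ℝ) ≤ x₂ ^ 3 / 3)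
      have h3 : (0:ℝ) ≤ G * x₂ ^ 3 := mul_nonneg hGnn hx3.le
      linarith [hcs]
  calc (∫ x₂ in (0:ℝ)..b, (-(∫ s in (0:ℝ)..x₂, f (x₁, s))) ^ 2 / x₂ ^ 3)
      ≤ ∫ _x₂ in (0:ℝ)..b, G := by
        apply intervalIntegral.integral_mono_on hb.le ?_ (intervalIntegrable_const) hpt
        exact ((cont_streamInt hf hε hf0).comp (Continuous.prodMk_right x₁)).intervalIntegrable _ _
  _ = b * G := by simp

/-- Weighted estimate for the stream function `ψ(x₁,x₂) = -∫₀^{x₂} v₁(x₁,s) ds`. -/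
theorem stream_function_weighted_estimate :
    ∃ N : ℝ, 0 < N ∧ ∀ a b : ℝ, 0 < a → 0 < b →
      ∀ v1 v2 : ℝ × ℝ → ℝ, TestVec UHP v1 v2 →
      Real.sqrt (∫ x₁ in (-a)..a, ∫ x₂ in (0:ℝ)..b,
          (-(∫ s in (0:ℝ)..x₂, v1 (x₁, s))) ^ 2 / x₂ ^ 3) ≤
      N * Real.sqrt b * Real.sqrt (∫ x₁ in (-a)..a, ∫ x₂ in (0:ℝ)..b,
          (v1 (x₁, x₂) ^ 2 + v2 (x₁, x₂) ^ 2) / x₂ ^ 2) := by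

  refine ⟨1, one_pos, ?_⟩
  intro a b ha hb v1 v2 hv
  obtain ⟨⟨hs1, hc1, hsp1⟩, ⟨hs2, hc2, hsp2⟩, -⟩ := hv
  obtain ⟨ε₁, hε₁, h01⟩ := testfun_eps hc1 hsp1
  obtain ⟨ε₂, hε₂, h02⟩ := testfun_eps hc2 hsp2
  have hε : 0 < min ε₁ ε₂ := lt_min hε₁ hε₂
  have h01' : ∀ x : ℝ × ℝ, x.2 ≤ min ε₁ ε₂ → v1 x = 0 :=
    fun x hx => h01 x (hx.trans (min_le_left _ _))
  have h02' : ∀ x : ℝ × ℝ, x.2 ≤ min ε₁ ε₂ → v2 x = 0 :=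
    fun x hx => h02 x (hx.trans (min_le_right _ _))
  have hcv1 : Continuous v1 := hs1.continuous
  have hcv2 : Continuous v2 := hs2.continuous
  have hH := cont_streamInt hcv1 hε h01'
  have hQ := cont_quot hcv1 hcv2 hε h01' h02'
  have hI1 : Continuous (fun x₁ : ℝ =>
      ∫ x₂ in (0:ℝ)..b, (-(∫ s in (0:ℝ)..x₂, v1 (x₁, s))) ^ 2 / x₂ ^ 3) := by
    apply intervalIntegral.continuous_parametric_intervalIntegral_of_continuous' (μ := volume)
      (f := fun (x₁ : ℝ) (x₂ : ℝ) => (-(∫ s in (0:ℝ)..x₂, v1 (x₁, s))) ^ 2 / x₂ ^ 3)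
    exact hH
  have hI2 : Continuous (fun x₁ : ℝ =>
      ∫ x₂ in (0:ℝ)..b, (v1 (x₁, x₂) ^ 2 + v2 (x₁, x₂) ^ 2) / x₂ ^ 2) := by
    apply intervalIntegral.continuous_parametric_intervalIntegral_of_continuous' (μ := volume)
      (f := fun (x₁ : ℝ) (x₂ : ℝ) => (v1 (x₁, x₂) ^ 2 + v2 (x₁, x₂) ^ 2) / x₂ ^ 2)
    exact hQ
  have houter : (∫ x₁ in (-a)..a, ∫ x₂ in (0:ℝ)..b,
        (-(∫ s in (0:ℝ)..x₂, v1 (x₁, s))) ^ 2 / x₂ ^ 3)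
      ≤ ∫ x₁ in (-a)..a, b * ∫ x₂ in (0:ℝ)..b,
        (v1 (x₁, x₂) ^ 2 + v2 (x₁, x₂) ^ 2) / x₂ ^ 2 := by
    apply intervalIntegral.integral_mono_on (by linarith : -a ≤ a)
      (hI1.intervalIntegrable _ _) ((continuous_const.mul hI2).intervalIntegrable _ _)
    exact fun x₁ _ => inner_bound hcv1 hcv2 hε h01' h02' hb x₁
  have hmul : (∫ x₁ in (-a)..a, b * ∫ x₂ in (0:ℝ)..b,
        (v1 (x₁, x₂) ^ 2 + v2 (x₁, x₂) ^ 2) / x₂ ^ 2)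
      = b * ∫ x₁ in (-a)..a, ∫ x₂ in (0:ℝ)..b,
        (v1 (x₁, x₂) ^ 2 + v2 (x₁, x₂) ^ 2) / x₂ ^ 2 :=
    intervalIntegral.integral_const_mul _ _
  rw [one_mul, ← Real.sqrt_mul hb.le]
  exact Real.sqrt_le_sqrt (le_trans houter (le_of_eq hmul))

end
end

section
/- There exists a constant N > 0 such that for every v = (v₁,v₂) ∈ C_{c,σ}^∞(ℝ²₊) and every x = (x₁,x₂) ∈ ℝ²₊, the stream function ψ(x₁,x₂) = −∫₀^{x₂} v₁(x₁,s) ds satisfies |ψ(x)| ≤ N ‖∇v₁‖_{L²(ℝ²₊)} when x₂ ≤ 1, and |ψ(x)| ≤ N ‖∇v₁‖_{L²(ℝ²₊)} + ‖v₁‖_X (ln x₂)^{1/2} when x₂ > 1. -/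
open MeasureTheory Filter Set
open scoped ENNReal Topology

noncomputable section

/-- The square of the mixed norm `‖f‖_X` of a scalar function. -/
def Xnorm1Sq (f : ℝ × ℝ → ℝ) : ℝ≥0∞ :=
  ∫⁻ t in Set.Ioi (0 : ℝ), ENNReal.ofReal t *
    (essSup (fun s => ENNReal.ofReal |f (s, t)|) volume) ^ 2

lemma my_cs {α : Type*} [MeasurableSpace α] (μ : Measure α) (f g : α → ℝ)
    (hf : Integrable (fun s => f s ^ 2) μ) (hg : Integrable (fun s => g s ^ 2) μ)
    (hfg : Integrable (fun s => f s * g s) μ) :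
    (∫ s, f s * g s ∂μ) ^ 2 ≤ (∫ s, f s ^ 2 ∂μ) * (∫ s, g s ^ 2 ∂μ) := by
  set A := ∫ s, f s ^ 2 ∂μ with hA
  set B := ∫ s, f s * g s ∂μ with hB
  set C := ∫ s, g s ^ 2 ∂μ with hC
  have key : ∀ l : ℝ, 0 ≤ A * (l * l) + (-2 * B) * l + C := by
    intro l
    have h0 : 0 ≤ ∫ s, (l * f s - g s) ^ 2 ∂μ := integral_nonneg fun s => sq_nonneg _
    have e : (fun s => (l * f s - g s) ^ 2)
        = fun s => (l ^ 2 * f s ^ 2 - 2 * l * (f s * g s)) + g s ^ 2 := by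
      funext s; ring
    have i1 : Integrable (fun s => l ^ 2 * f s ^ 2 - 2 * l * (f s * g s)) μ :=
      (hf.const_mul _).sub (hfg.const_mul _)
    rw [e, integral_add i1 hg,
      integral_sub (f := fun s => l ^ 2 * f s ^ 2) (g := fun s => 2 * l * (f s * g s))
        (hf.const_mul _) (hfg.const_mul _),
      integral_const_mul, integral_const_mul] at h0
    nlinarith [h0]
  have h := discrim_le_zero key
  rw [discrim] at h
  nlinarith [h]

lemma my_cs_interval {f g : ℝ → ℝ} {a b : ℝ} (hab : a ≤ b)
    (hf : ContinuousOn f (Icc a b)) (hg : ContinuousOn g (Icc a b)) :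
    (∫ s in a..b, f s * g s) ^ 2 ≤ (∫ s in a..b, f s ^ 2) * (∫ s in a..b, g s ^ 2) := by
  rw [intervalIntegral.integral_of_le hab, intervalIntegral.integral_of_le hab,
    intervalIntegral.integral_of_le hab]
  refine my_cs _ f g ?_ ?_ ?_
  · exact ((hf.pow 2).integrableOn_compact isCompact_Icc).mono_set Ioc_subset_Icc_self
  · exact ((hg.pow 2).integrableOn_compact isCompact_Icc).mono_set Ioc_subset_Icc_self
  · exact ((hf.mul hg).integrableOn_compact isCompact_Icc).mono_set Ioc_subset_Icc_self

lemma uhp_prod' : UHP = Set.univ ×ˢ Ioi (0:ℝ) := by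
  ext ⟨t, s⟩; simp [UHP, Set.mem_prod]

lemma restrict_uhp' : (volume : Measure (ℝ × ℝ)).restrict UHP
    = (volume : Measure ℝ).prod ((volume : Measure ℝ).restrict (Ioi 0)) := by
  rw [uhp_prod', MeasureTheory.Measure.volume_eq_prod, ← Measure.prod_restrict,
    Measure.restrict_univ]

lemma slice_fst_hcs {P : ℝ × ℝ → ℝ} (hc : HasCompactSupport P) (s : ℝ) :
    HasCompactSupport (fun t => P (t, s)) := by
  obtain ⟨R, hR⟩ := hc.isBounded.subset_closedBall 0
  refine HasCompactSupport.intro (isCompact_Icc (a := -R) (b := R)) fun t ht => ?_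
  apply image_eq_zero_of_notMem_tsupport
  intro hmem
  have := hR hmem
  rw [Metric.mem_closedBall, dist_zero_right] at this
  have h1 : |t| ≤ R := le_trans (le_max_left _ _) this
  simp only [mem_Icc, not_and_or, not_le] at ht
  rcases ht with h | h
  · exact absurd (neg_le_of_abs_le h1) (not_le.2 h)
  · exact absurd (le_of_abs_le h1) (not_le.2 h)

lemma slice_snd_hcs {P : ℝ × ℝ → ℝ} (hc : HasCompactSupport P) (t : ℝ) :
    HasCompactSupport (fun s => P (t, s)) := by
  obtain ⟨R, hR⟩ := hc.isBounded.subset_closedBall 0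
  refine HasCompactSupport.intro (isCompact_Icc (a := -R) (b := R)) fun s hs => ?_
  apply image_eq_zero_of_notMem_tsupport
  intro hmem
  have := hR hmem
  rw [Metric.mem_closedBall, dist_zero_right] at this
  have h1 : |s| ≤ R := le_trans (le_max_right _ _) this
  simp only [mem_Icc, not_and_or, not_le] at hs
  rcases hs with h | h
  · exact absurd (neg_le_of_abs_le h1) (not_le.2 h)
  · exact absurd (le_of_abs_le h1) (not_le.2 h)

lemma prod_integrable' {P : ℝ × ℝ → ℝ} (hP : Continuous P) (hc : HasCompactSupport P) :
    Integrable P ((volume : Measure ℝ).prod ((volume : Measure ℝ).restrict (Ioi 0))) := by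
  rw [← restrict_uhp']
  exact (hP.integrable_of_hasCompactSupport hc).restrict

lemma integral_uhp_left {P : ℝ × ℝ → ℝ} (hP : Continuous P) (hc : HasCompactSupport P) :
    (∫ y in UHP, P y) = ∫ t : ℝ, ∫ s in Ioi (0:ℝ), P (t, s) := by
  rw [show (∫ y in UHP, P y) = ∫ y, P y ∂((volume : Measure (ℝ × ℝ)).restrict UHP) from rfl,
    restrict_uhp']
  exact MeasureTheory.integral_prod P (prod_integrable' hP hc)

lemma integral_uhp_right {P : ℝ × ℝ → ℝ} (hP : Continuous P) (hc : HasCompactSupport P) :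
    (∫ y in UHP, P y) = ∫ s in Ioi (0:ℝ), ∫ t : ℝ, P (t, s) := by
  rw [show (∫ y in UHP, P y) = ∫ y, P y ∂((volume : Measure (ℝ × ℝ)).restrict UHP) from rfl,
    restrict_uhp']
  exact MeasureTheory.integral_prod_symm P (prod_integrable' hP hc)

lemma integrable_left {P : ℝ × ℝ → ℝ} (hP : Continuous P) (hc : HasCompactSupport P) :
    Integrable (fun t => ∫ s in Ioi (0:ℝ), P (t, s)) (volume : Measure ℝ) :=
  (prod_integrable' hP hc).integral_prod_left

lemma integrable_right {P : ℝ × ℝ → ℝ} (hP : Continuous P) (hc : HasCompactSupport P) :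
    Integrable (fun s => ∫ t : ℝ, P (t, s)) ((volume : Measure ℝ).restrict (Ioi 0)) :=
  (prod_integrable' hP hc).integral_prod_right

lemma le_essSup_cont {f : ℝ → ℝ≥0∞} (hf : Continuous f) (t : ℝ) :
    f t ≤ essSup f (volume : Measure ℝ) := by
  by_contra h
  push_neg at h
  have hU : IsOpen {s : ℝ | essSup f volume < f s} := isOpen_lt continuous_const hf
  have hpos : 0 < volume {s : ℝ | essSup f volume < f s} := hU.measure_pos volume ⟨t, h⟩
  have hae : ∀ᵐ s : ℝ, f s ≤ essSup f volume := ENNReal.ae_le_essSup f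
  rw [MeasureTheory.ae_iff] at hae
  simp only [not_le] at hae
  exact absurd hae (ne_of_gt hpos)

lemma intervalIntegrable_of_Ioi {h : ℝ → ℝ}
    (hi : Integrable h ((volume : Measure ℝ).restrict (Ioi 0))) {a : ℝ} (ha : 0 ≤ a) :
    IntervalIntegrable h volume 0 a := by
  rw [intervalIntegrable_iff_integrableOn_Ioc_of_le ha]
  have := hi.restrict (s := Ioc 0 a)
  rwa [Measure.restrict_restrict measurableSet_Ioc,
    inter_eq_left.mpr (Ioc_subset_Ioi_self)] at this

lemma contD1 {u : ℝ × ℝ → ℝ} (hu : ContDiff ℝ (⊤ : ℕ∞) u) : Continuous (D1 u) :=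
  (hu.continuous_fderiv (by simp)).clm_apply continuous_const

lemma contD2 {u : ℝ × ℝ → ℝ} (hu : ContDiff ℝ (⊤ : ℕ∞) u) : Continuous (D2 u) :=
  (hu.continuous_fderiv (by simp)).clm_apply continuous_const

lemma hcsD1 {u : ℝ × ℝ → ℝ} (hcs : HasCompactSupport u) : HasCompactSupport (D1 u) :=
  (hcs.fderiv ℝ).comp_left (g := fun L : (ℝ × ℝ) →L[ℝ] ℝ => L (1, 0)) rfl

lemma hcsD2 {u : ℝ × ℝ → ℝ} (hcs : HasCompactSupport u) : HasCompactSupport (D2 u) :=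
  (hcs.fderiv ℝ).comp_left (g := fun L : (ℝ × ℝ) →L[ℝ] ℝ => L (0, 1)) rfl

lemma hcs_add {f g : ℝ × ℝ → ℝ} (hf : HasCompactSupport f) (hg : HasCompactSupport g) :
    HasCompactSupport (fun y => f y + g y) := hf.add hg

lemma hasDerivAt_fst {u : ℝ × ℝ → ℝ} (hu : ContDiff ℝ (⊤ : ℕ∞) u) (s t : ℝ) :
    HasDerivAt (fun r => u (r, s)) (D1 u (t, s)) t := by
  have hd := (hu.differentiable (by simp) (t, s)).hasFDerivAt
  have hline : HasDerivAt (fun r : ℝ => (r, s)) ((1:ℝ), (0:ℝ)) t :=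
    (hasDerivAt_id t).prodMk (hasDerivAt_const t s)
  exact hd.comp_hasDerivAt t hline

lemma hasDerivAt_snd {u : ℝ × ℝ → ℝ} (hu : ContDiff ℝ (⊤ : ℕ∞) u) (t s : ℝ) :
    HasDerivAt (fun r => u (t, r)) (D2 u (t, s)) s := by
  have hd := (hu.differentiable (by simp) (t, s)).hasFDerivAt
  have hline : HasDerivAt (fun r : ℝ => (t, r)) ((0:ℝ), (1:ℝ)) s :=
    (hasDerivAt_const s t).prodMk (hasDerivAt_id s)
  exact hd.comp_hasDerivAt s hline

set_option maxHeartbeats 1000000 in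
lemma part1 {u : ℝ × ℝ → ℝ} (hu : ContDiff ℝ (⊤ : ℕ∞) u) (hcs : HasCompactSupport u)
    (hsupp : tsupport u ⊆ UHP) {x₁ a : ℝ} (ha0 : 0 ≤ a) (ha1 : a ≤ 1) :
    |∫ s in (0:ℝ)..a, u (x₁, s)| ≤ Real.sqrt (∫ y in UHP, gradSq u y) := by
  have cu : Continuous u := hu.continuous
  have cD1 := contD1 hu
  have cD2 := contD2 hu
  have hzero : ∀ p : ℝ × ℝ, p.2 ≤ 0 → u p = 0 := by
    intro p hp
    apply image_eq_zero_of_notMem_tsupport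
    intro hmem
    have := hsupp hmem
    simp only [UHP, mem_setOf_eq] at this
    linarith
  -- continuity and support of the squared gradient components
  have cP1 : Continuous (fun y : ℝ × ℝ => u y ^ 2) := cu.pow 2
  have hP1 : HasCompactSupport (fun y : ℝ × ℝ => u y ^ 2) :=
    hcs.comp_left (g := fun r : ℝ => r ^ 2) (by simp)
  have cP2 : Continuous (fun y : ℝ × ℝ => (D2 u y) ^ 2) := cD2.pow 2
  have hP2 : HasCompactSupport (fun y : ℝ × ℝ => (D2 u y) ^ 2) :=
    (hcsD2 hcs).comp_left (g := fun r : ℝ => r ^ 2) (by simp)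
  have cPD1 : Continuous (fun y : ℝ × ℝ => (D1 u y) ^ 2) := cD1.pow 2
  have hPD1 : HasCompactSupport (fun y : ℝ × ℝ => (D1 u y) ^ 2) :=
    (hcsD1 hcs).comp_left (g := fun r : ℝ => r ^ 2) (by simp)
  have hUHPmeas : MeasurableSet UHP :=
    (isOpen_lt continuous_const continuous_snd).measurableSet
  -- FTC in the second variable
  have ftc2 : ∀ t s : ℝ, u (t, s) = ∫ τ in (0:ℝ)..s, D2 u (t, τ) := by
    intro t s
    have h := intervalIntegral.integral_eq_sub_of_hasDerivAt
      (f := fun r => u (t, r)) (f' := fun r => D2 u (t, r))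
      (fun τ _ => hasDerivAt_snd hu t τ)
      ((cD2.comp (continuous_const.prodMk continuous_id)).intervalIntegrable 0 s)
    have h' : (∫ τ in (0:ℝ)..s, D2 u (t, τ)) = u (t, s) - u (t, 0) := h
    rw [h', hzero (t, 0) le_rfl, sub_zero]
  set W : ℝ → ℝ := fun t => ∫ τ in Ioi (0:ℝ), (D2 u (t, τ)) ^ 2 with hWdef
  set D2I : ℝ := ∫ y in UHP, (D2 u y) ^ 2 with hD2Idef
  set E2 : ℝ := ∫ y in UHP, (D1 u y) ^ 2 with hE2def
  have eqD2 : D2I = ∫ t : ℝ, W t := integral_uhp_left cP2 hP2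
  have hD2Inn : 0 ≤ D2I := setIntegral_nonneg hUHPmeas fun y _ => sq_nonneg _
  have hE2nn : 0 ≤ E2 := setIntegral_nonneg hUHPmeas fun y _ => sq_nonneg _
  -- pointwise square bound from the vertical direction
  have sq2 : ∀ t s : ℝ, 0 ≤ s → u (t, s) ^ 2 ≤ s * W t := by
    intro t s hs
    have slicecont : Continuous (fun τ => D2 u (t, τ)) :=
      cD2.comp (continuous_const.prodMk continuous_id)
    have sliceint : Integrable (fun τ => (D2 u (t, τ)) ^ 2) :=
      (slicecont.pow 2).integrable_of_hasCompactSupport (slice_snd_hcs hP2 t)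
    have cs := my_cs_interval (f := fun τ => D2 u (t, τ)) (g := fun _ => (1:ℝ)) hs
      slicecont.continuousOn continuousOn_const
    have e1 : (∫ τ in (0:ℝ)..s, D2 u (t, τ) * 1) = ∫ τ in (0:ℝ)..s, D2 u (t, τ) := by
      simp
    have e2 : (∫ τ in (0:ℝ)..s, (1:ℝ) ^ 2) = s := by simp
    rw [e1, e2] at cs
    have mono : (∫ τ in (0:ℝ)..s, (D2 u (t, τ)) ^ 2) ≤ W t := by
      rw [intervalIntegral.integral_of_le hs]
      exact setIntegral_mono_set sliceint.integrableOn
        (ae_of_all _ fun τ => sq_nonneg _)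
        (HasSubset.Subset.eventuallyLE Ioc_subset_Ioi_self)
    calc u (t, s) ^ 2 = (∫ τ in (0:ℝ)..s, D2 u (t, τ)) ^ 2 := by rw [← ftc2]
      _ ≤ (∫ τ in (0:ℝ)..s, (D2 u (t, τ)) ^ 2) * s := cs
      _ ≤ W t * s := mul_le_mul_of_nonneg_right mono hs
      _ = s * W t := mul_comm _ _
  -- FTC in the first variable
  have sq1 : ∀ s : ℝ, u (x₁, s) ^ 2 ≤ ∫ t : ℝ, (u (t, s) ^ 2 + (D1 u (t, s)) ^ 2) := by
    intro s
    obtain ⟨R, hR⟩ := hcs.isBounded.subset_closedBall 0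
    set r : ℝ := min x₁ (-(|R| + 1)) with hrdef
    have hrx : r ≤ x₁ := min_le_left _ _
    have hur : u (r, s) = 0 := by
      apply image_eq_zero_of_notMem_tsupport
      intro hmem
      have h1 := hR hmem
      rw [Metric.mem_closedBall, dist_zero_right] at h1
      have h2 : |r| ≤ R := le_trans (le_max_left _ _) h1
      have h3 : r ≤ -(|R| + 1) := min_le_right _ _
      have h4 : -|r| ≤ r := neg_abs_le r
      have h5 : R ≤ |R| := le_abs_self R
      linarith
    have hD : ∀ t' ∈ uIcc r x₁, HasDerivAt (fun t => u (t, s) ^ 2)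
        (D1 u (t', s) * u (t', s) + u (t', s) * D1 u (t', s)) t' := by
      intro t' _
      have h := (hasDerivAt_fst hu s t').mul (hasDerivAt_fst hu s t')
      have e : ((fun t => u (t, s)) * (fun t => u (t, s))) = fun t => u (t, s) ^ 2 := by
        funext t; simp only [Pi.mul_apply]; ring
      rw [e] at h
      exact h
    have cslice1 : Continuous (fun t => u (t, s)) :=
      cu.comp (continuous_id.prodMk continuous_const)
    have cslice2 : Continuous (fun t => D1 u (t, s)) :=
      cD1.comp (continuous_id.prodMk continuous_const)
    have hftc := intervalIntegral.integral_eq_sub_of_hasDerivAt hD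
      (((cslice2.mul cslice1).add (cslice1.mul cslice2)).intervalIntegrable r x₁)
    have key : u (x₁, s) ^ 2
        = ∫ t in r..x₁, (D1 u (t, s) * u (t, s) + u (t, s) * D1 u (t, s)) := by
      rw [hftc, hur]; ring
    have hPcont : Continuous (fun t : ℝ => u (t, s) ^ 2 + (D1 u (t, s)) ^ 2) :=
      (cslice1.pow 2).add (cslice2.pow 2)
    have hPslicecs : HasCompactSupport (fun t : ℝ => u (t, s) ^ 2 + (D1 u (t, s)) ^ 2) :=
      slice_fst_hcs (hcs_add hP1 hPD1) s
    have hPint : Integrable (fun t : ℝ => u (t, s) ^ 2 + (D1 u (t, s)) ^ 2) :=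
      hPcont.integrable_of_hasCompactSupport hPslicecs
    rw [key]
    calc (∫ t in r..x₁, (D1 u (t, s) * u (t, s) + u (t, s) * D1 u (t, s)))
        ≤ ∫ t in r..x₁, (u (t, s) ^ 2 + (D1 u (t, s)) ^ 2) := by
          apply intervalIntegral.integral_mono_on hrx
            (((cslice2.mul cslice1).add (cslice1.mul cslice2)).intervalIntegrable r x₁)
            (hPcont.intervalIntegrable r x₁)
          intro t _
          show D1 u (t, s) * u (t, s) + u (t, s) * D1 u (t, s) ≤ u (t, s) ^ 2 + (D1 u (t, s)) ^ 2
          nlinarith [sq_nonneg (u (t, s) - D1 u (t, s))]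
      _ ≤ ∫ t : ℝ, (u (t, s) ^ 2 + (D1 u (t, s)) ^ 2) := by
          rw [intervalIntegral.integral_of_le hrx]
          exact setIntegral_le_integral hPint (ae_of_all _ fun t => by positivity)
  -- slice integrals
  set V2 : ℝ → ℝ := fun s => ∫ t : ℝ, u (t, s) ^ 2 with hV2def
  set G2 : ℝ → ℝ := fun s => ∫ t : ℝ, (D1 u (t, s)) ^ 2 with hG2def
  have iiV2 : IntervalIntegrable V2 volume 0 a :=
    intervalIntegrable_of_Ioi (integrable_right cP1 hP1) ha0
  have iiG2 : IntervalIntegrable G2 volume 0 a :=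
    intervalIntegrable_of_Ioi (integrable_right cPD1 hPD1) ha0
  have hV2le : ∀ s : ℝ, 0 ≤ s → V2 s ≤ s * D2I := by
    intro s hs
    have h1 : V2 s ≤ ∫ t : ℝ, s * W t := by
      apply integral_mono_of_nonneg (ae_of_all _ fun t => sq_nonneg _)
        ((integrable_left cP2 hP2).const_mul s)
        (ae_of_all _ fun t => sq2 t s hs)
    rw [integral_const_mul] at h1
    rw [eqD2]
    exact h1
  have hsplit : ∀ s : ℝ, (∫ t : ℝ, (u (t, s) ^ 2 + (D1 u (t, s)) ^ 2)) = V2 s + G2 s := by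
    intro s
    apply integral_add
    · exact (cP1.comp (continuous_id.prodMk continuous_const)).integrable_of_hasCompactSupport
        (slice_fst_hcs hP1 s)
    · exact (cPD1.comp (continuous_id.prodMk continuous_const)).integrable_of_hasCompactSupport
        (slice_fst_hcs hPD1 s)
  -- assemble
  have cuslice : Continuous (fun s => u (x₁, s)) :=
    cu.comp (continuous_const.prodMk continuous_id)
  have step1 : |∫ s in (0:ℝ)..a, u (x₁, s)| ≤ ∫ s in (0:ℝ)..a, |u (x₁, s)| :=
    intervalIntegral.abs_integral_le_integral_abs ha0
  have hL0 : 0 ≤ ∫ s in (0:ℝ)..a, |u (x₁, s)| :=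
    intervalIntegral.integral_nonneg ha0 fun s _ => abs_nonneg _
  have step2 : (∫ s in (0:ℝ)..a, |u (x₁, s)|) ^ 2
      ≤ (∫ s in (0:ℝ)..a, u (x₁, s) ^ 2) * a := by
    have cs := my_cs_interval (f := fun s => |u (x₁, s)|) (g := fun _ => (1:ℝ)) ha0
      cuslice.abs.continuousOn continuousOn_const
    have e1 : (∫ s in (0:ℝ)..a, |u (x₁, s)| * 1) = ∫ s in (0:ℝ)..a, |u (x₁, s)| := by simp
    have e2 : (∫ s in (0:ℝ)..a, (1:ℝ) ^ 2) = a := by simp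
    have e3 : (∫ s in (0:ℝ)..a, |u (x₁, s)| ^ 2) = ∫ s in (0:ℝ)..a, u (x₁, s) ^ 2 := by
      apply intervalIntegral.integral_congr
      intro s _
      exact sq_abs _
    rw [e1, e2, e3] at cs
    exact cs
  have step3 : (∫ s in (0:ℝ)..a, u (x₁, s) ^ 2) ≤ (∫ s in (0:ℝ)..a, V2 s)
      + ∫ s in (0:ℝ)..a, G2 s := by
    rw [← intervalIntegral.integral_add iiV2 iiG2]
    apply intervalIntegral.integral_mono_on ha0
      ((cuslice.pow 2).intervalIntegrable 0 a) (iiV2.add iiG2)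
    intro s _
    have := sq1 s
    rw [hsplit s] at this
    exact this
  have step5 : (∫ s in (0:ℝ)..a, V2 s) ≤ D2I := by
    have h1 : (∫ s in (0:ℝ)..a, V2 s) ≤ ∫ s in (0:ℝ)..a, s * D2I := by
      apply intervalIntegral.integral_mono_on ha0 iiV2
        ((continuous_id.mul continuous_const).intervalIntegrable 0 a)
      intro s hs
      exact hV2le s hs.1
    have h2 : (∫ s in (0:ℝ)..a, s * D2I) = (a ^ 2 - 0 ^ 2) / 2 * D2I := by
      rw [intervalIntegral.integral_mul_const, integral_id]
    rw [h2] at h1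
    have ha2 : a ^ 2 ≤ 1 := by nlinarith
    nlinarith [mul_le_mul_of_nonneg_right ha2 hD2Inn]
  have step6 : (∫ s in (0:ℝ)..a, G2 s) ≤ E2 := by
    rw [intervalIntegral.integral_of_le ha0]
    have h1 : (∫ s in Ioc (0:ℝ) a, G2 s) ≤ ∫ s in Ioi (0:ℝ), G2 s := by
      apply setIntegral_mono_set (integrable_right cPD1 hPD1)
        (ae_of_all _ fun s => integral_nonneg fun t => sq_nonneg _)
        (HasSubset.Subset.eventuallyLE Ioc_subset_Ioi_self)
    rw [← integral_uhp_right cPD1 hPD1] at h1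
    exact h1
  have hIsplit : (∫ y in UHP, gradSq u y) = E2 + D2I := by
    rw [hE2def, hD2Idef, ← integral_add (cPD1.integrable_of_hasCompactSupport hPD1).restrict
      (cP2.integrable_of_hasCompactSupport hP2).restrict]
    rfl
  have hsq : (∫ s in (0:ℝ)..a, |u (x₁, s)|) ^ 2 ≤ ∫ y in UHP, gradSq u y := by
    have h4 : (∫ s in (0:ℝ)..a, u (x₁, s) ^ 2) ≤ D2I + E2 := by linarith
    have h5 : 0 ≤ (∫ s in (0:ℝ)..a, u (x₁, s) ^ 2) :=
      intervalIntegral.integral_nonneg ha0 fun s _ => sq_nonneg _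
    rw [hIsplit]
    nlinarith
  calc |∫ s in (0:ℝ)..a, u (x₁, s)| ≤ ∫ s in (0:ℝ)..a, |u (x₁, s)| := step1
    _ ≤ Real.sqrt (∫ y in UHP, gradSq u y) := by
        rw [Real.le_sqrt hL0 (by nlinarith [hsq])]
        exact hsq

lemma Xfin {u : ℝ × ℝ → ℝ} (hu : ContDiff ℝ (⊤ : ℕ∞) u) (hcs : HasCompactSupport u) :
    Xnorm1Sq u ≠ ⊤ := by
  obtain ⟨C, hC⟩ := hcs.exists_bound_of_continuous hu.continuous
  have hKc : IsCompact (tsupport u) := hcs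
  set T : ℝ := max (sSup (Prod.snd '' tsupport u)) 1 with hT
  have hT1 : (1:ℝ) ≤ T := le_max_right _ _
  have hbdd : BddAbove (Prod.snd '' tsupport u) := (hKc.image continuous_snd).bddAbove
  have hzero : ∀ s : ℝ, T < s → ∀ t : ℝ, u (t, s) = 0 := by
    intro s hs t
    apply image_eq_zero_of_notMem_tsupport
    intro hmem
    have h1 : s ∈ Prod.snd '' tsupport u := ⟨(t, s), hmem, rfl⟩
    have h2 := le_csSup hbdd h1
    have h3 := le_max_left (sSup (Prod.snd '' tsupport u)) 1
    linarith
  have hM : ∀ s : ℝ, essSup (fun t => ENNReal.ofReal |u (t, s)|) volume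
      ≤ ENNReal.ofReal C := by
    intro s
    refine essSup_le_of_ae_le _ (ae_of_all _ fun t => ?_)
    exact ENNReal.ofReal_le_ofReal (by simpa using hC (t, s))
  have hM0 : ∀ s : ℝ, T < s →
      essSup (fun t => ENNReal.ofReal |u (t, s)|) volume = 0 := by
    intro s hs
    refine le_antisymm ?_ (by simp)
    refine essSup_le_of_ae_le _ (ae_of_all _ fun t => ?_)
    exact le_of_eq (by simp [hzero s hs t])
  rw [Xnorm1Sq]
  have hsplit : Ioi (0:ℝ) = Ioc (0:ℝ) T ∪ Ioi T :=
    (Ioc_union_Ioi_eq_Ioi (by linarith)).symm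
  rw [hsplit, lintegral_union measurableSet_Ioi (Ioc_disjoint_Ioi le_rfl)]
  have h2 : (∫⁻ s in Ioi T, ENNReal.ofReal s *
      (essSup (fun t => ENNReal.ofReal |u (t, s)|) volume) ^ 2) = 0 := by
    rw [setLIntegral_congr_fun measurableSet_Ioi
      (fun s (hs : s ∈ Ioi T) => by rw [hM0 s hs])]
    simp
  rw [h2, add_zero]
  have h1 : (∫⁻ s in Ioc (0:ℝ) T, ENNReal.ofReal s *
      (essSup (fun t => ENNReal.ofReal |u (t, s)|) volume) ^ 2)
      ≤ (ENNReal.ofReal T * ENNReal.ofReal C ^ 2) * volume (Ioc (0:ℝ) T) := by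
    rw [← setLIntegral_const]
    refine setLIntegral_mono measurable_const fun s hs => ?_
    exact mul_le_mul' (ENNReal.ofReal_le_ofReal hs.2)
      (pow_le_pow_left₀ (by simp) (hM s) 2)
  refine ne_top_of_le_ne_top ?_ h1
  rw [Real.volume_Ioc]
  exact ENNReal.mul_ne_top (ENNReal.mul_ne_top ENNReal.ofReal_ne_top
    (by simp [ENNReal.pow_ne_top, ENNReal.ofReal_ne_top])) ENNReal.ofReal_ne_top

lemma part2 {u : ℝ × ℝ → ℝ} (hu : ContDiff ℝ (⊤ : ℕ∞) u) (hcs : HasCompactSupport u)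
    (hsupp : tsupport u ⊆ UHP) {x₁ b : ℝ} (hb : 1 < b) :
    |∫ s in (1:ℝ)..b, u (x₁, s)| ≤
      Real.sqrt (Xnorm1Sq u).toReal * Real.sqrt (Real.log b) := by
  have cu : Continuous u := hu.continuous
  have hXfin := Xfin hu hcs
  have hb1 : (1:ℝ) ≤ b := hb.le
  have cuslice : Continuous (fun s => u (x₁, s)) :=
    cu.comp (continuous_const.prodMk continuous_id)
  have hpt : ∀ s : ℝ, ENNReal.ofReal |u (x₁, s)|
      ≤ essSup (fun t => ENNReal.ofReal |u (t, s)|) volume := by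
    intro s
    exact le_essSup_cont (ENNReal.continuous_ofReal.comp
      (cu.comp (continuous_id.prodMk continuous_const)).abs) x₁
  have hfcont : ContinuousOn (fun s : ℝ => (Real.sqrt s)⁻¹) (Icc 1 b) := by
    apply ContinuousOn.inv₀ Real.continuous_sqrt.continuousOn
    intro s hs
    exact (Real.sqrt_pos.mpr (by linarith [hs.1])).ne'
  have hgcont : ContinuousOn (fun s : ℝ => Real.sqrt s * |u (x₁, s)|) (Icc 1 b) :=
    (Real.continuous_sqrt.mul cuslice.abs).continuousOn
  have cs := my_cs_interval hb1 hfcont hgcont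
  have e1 : (∫ s in (1:ℝ)..b, (Real.sqrt s)⁻¹ * (Real.sqrt s * |u (x₁, s)|))
      = ∫ s in (1:ℝ)..b, |u (x₁, s)| := by
    apply intervalIntegral.integral_congr
    intro s hs
    rw [uIcc_of_le hb1] at hs
    have hsn : Real.sqrt s ≠ 0 := (Real.sqrt_pos.mpr (by linarith [hs.1])).ne'
    field_simp
  have e2 : (∫ s in (1:ℝ)..b, ((Real.sqrt s)⁻¹) ^ 2) = Real.log b := by
    have he : EqOn (fun s : ℝ => ((Real.sqrt s)⁻¹) ^ 2) (fun s => 1 / s) (uIcc 1 b) := by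
      intro s hs
      rw [uIcc_of_le hb1] at hs
      have hs0 : (0:ℝ) ≤ s := by linarith [hs.1]
      simp only [inv_pow, Real.sq_sqrt hs0, one_div]
    rw [intervalIntegral.integral_congr he, integral_one_div, div_one]
    rw [uIcc_of_le hb1]
    intro h
    linarith [h.1]
  have e3 : (∫ s in (1:ℝ)..b, (Real.sqrt s * |u (x₁, s)|) ^ 2)
      = ∫ s in (1:ℝ)..b, s * u (x₁, s) ^ 2 := by
    apply intervalIntegral.integral_congr
    intro s hs
    rw [uIcc_of_le hb1] at hs
    have hs0 : (0:ℝ) ≤ s := by linarith [hs.1]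
    show (Real.sqrt s * |u (x₁, s)|) ^ 2 = s * u (x₁, s) ^ 2
    rw [mul_pow, Real.sq_sqrt hs0, sq_abs]
  rw [e1, e2, e3] at cs
  set K : ℝ := ∫ s in (1:ℝ)..b, s * u (x₁, s) ^ 2 with hKdef
  have hKnn : 0 ≤ K := intervalIntegral.integral_nonneg hb1
    fun s hs => mul_nonneg (by linarith [hs.1]) (sq_nonneg _)
  have hKle : K ≤ (Xnorm1Sq u).toReal := by
    have hKint : IntegrableOn (fun s => s * u (x₁, s) ^ 2) (Ioc 1 b) :=
      (((continuous_id.mul (cuslice.pow 2))).continuousOn.integrableOn_compact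
        isCompact_Icc).mono_set Ioc_subset_Icc_self
    have h0 : ENNReal.ofReal K
        = ∫⁻ s in Ioc (1:ℝ) b, ENNReal.ofReal (s * u (x₁, s) ^ 2) := by
      rw [hKdef, intervalIntegral.integral_of_le hb1]
      exact ofReal_integral_eq_lintegral_ofReal hKint
        ((ae_restrict_iff' measurableSet_Ioc).2 (ae_of_all _
          fun s hs => mul_nonneg (by linarith [hs.1]) (sq_nonneg _)))
    have h1 : (∫⁻ s in Ioc (1:ℝ) b, ENNReal.ofReal (s * u (x₁, s) ^ 2))
        ≤ ∫⁻ s in Ioi (0:ℝ), ENNReal.ofReal (s * u (x₁, s) ^ 2) :=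
      lintegral_mono_set fun s hs => lt_trans one_pos hs.1
    have h2 : (∫⁻ s in Ioi (0:ℝ), ENNReal.ofReal (s * u (x₁, s) ^ 2)) ≤ Xnorm1Sq u := by
      rw [Xnorm1Sq]
      apply lintegral_mono
      intro s
      show ENNReal.ofReal (s * u (x₁, s) ^ 2)
          ≤ ENNReal.ofReal s * essSup (fun t => ENNReal.ofReal |u (t, s)|) volume ^ 2
      rcases le_or_gt 0 s with hs | hs
      · rw [ENNReal.ofReal_mul hs]
        have he : ENNReal.ofReal (u (x₁, s) ^ 2) = ENNReal.ofReal |u (x₁, s)| ^ 2 := by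
          rw [← ENNReal.ofReal_pow (abs_nonneg _), sq_abs]
        rw [he]
        exact mul_le_mul' le_rfl (pow_le_pow_left₀ (by simp) (hpt s) 2)
      · rw [ENNReal.ofReal_of_nonpos (mul_nonpos_of_nonpos_of_nonneg hs.le (sq_nonneg _))]
        simp
    have h3 : ENNReal.ofReal K ≤ Xnorm1Sq u := h0 ▸ le_trans h1 h2
    calc K = (ENNReal.ofReal K).toReal := (ENNReal.toReal_ofReal hKnn).symm
      _ ≤ (Xnorm1Sq u).toReal := ENNReal.toReal_mono hXfin h3
  have habs : |∫ s in (1:ℝ)..b, u (x₁, s)| ≤ ∫ s in (1:ℝ)..b, |u (x₁, s)| :=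
    intervalIntegral.abs_integral_le_integral_abs hb1
  have hlog0 : 0 ≤ Real.log b := Real.log_nonneg hb1
  have hL0 : 0 ≤ ∫ s in (1:ℝ)..b, |u (x₁, s)| :=
    intervalIntegral.integral_nonneg hb1 fun s _ => abs_nonneg _
  have h6 : (∫ s in (1:ℝ)..b, |u (x₁, s)|) ≤ Real.sqrt (Real.log b * K) := by
    rw [Real.le_sqrt hL0 (mul_nonneg hlog0 hKnn)]
    exact cs
  have h7 : Real.sqrt (Real.log b * K) = Real.sqrt K * Real.sqrt (Real.log b) := by
    rw [mul_comm, Real.sqrt_mul hKnn]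
  have h8 : Real.sqrt K ≤ Real.sqrt (Xnorm1Sq u).toReal := Real.sqrt_le_sqrt hKle
  calc |∫ s in (1:ℝ)..b, u (x₁, s)| ≤ ∫ s in (1:ℝ)..b, |u (x₁, s)| := habs
    _ ≤ Real.sqrt (Real.log b * K) := h6
    _ = Real.sqrt K * Real.sqrt (Real.log b) := h7
    _ ≤ Real.sqrt (Xnorm1Sq u).toReal * Real.sqrt (Real.log b) :=
        mul_le_mul_of_nonneg_right h8 (Real.sqrt_nonneg _)

/-- Pointwise estimate of the stream function `ψ(x₁,x₂) = -∫₀^{x₂} v₁(x₁,s) ds` in terms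
of `‖∇v₁‖_{L²}` and `‖v₁‖_X`. -/
theorem stream_function_X_estimate :
    ∃ N : ℝ, 0 < N ∧ ∀ v1 v2 : ℝ × ℝ → ℝ, TestVec UHP v1 v2 → ∀ x : ℝ × ℝ, x ∈ UHP →
      (x.2 ≤ 1 →
        |(-(∫ s in (0:ℝ)..x.2, v1 (x.1, s)))| ≤
          N * Real.sqrt (∫ y in UHP, gradSq v1 y)) ∧
      (1 < x.2 →
        |(-(∫ s in (0:ℝ)..x.2, v1 (x.1, s)))| ≤
          N * Real.sqrt (∫ y in UHP, gradSq v1 y) +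
            Real.sqrt (Xnorm1Sq v1).toReal * Real.sqrt (Real.log x.2)) := by
  refine ⟨1, one_pos, ?_⟩
  intro v1 v2 htv x hx
  obtain ⟨⟨hu, hcs, hsupp⟩, -, -⟩ := htv
  have hx2 : (0:ℝ) < x.2 := hx
  constructor
  · intro hle
    rw [abs_neg, one_mul]
    exact part1 hu hcs hsupp hx2.le hle
  · intro hgt
    rw [abs_neg, one_mul]
    have hii1 : IntervalIntegrable (fun s => v1 (x.1, s)) volume 0 1 :=
      (hu.continuous.comp (continuous_const.prodMk continuous_id)).intervalIntegrable 0 1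
    have hii2 : IntervalIntegrable (fun s => v1 (x.1, s)) volume 1 x.2 :=
      (hu.continuous.comp (continuous_const.prodMk continuous_id)).intervalIntegrable 1 x.2
    rw [← intervalIntegral.integral_add_adjacent_intervals hii1 hii2]
    calc |(∫ s in (0:ℝ)..1, v1 (x.1, s)) + ∫ s in (1:ℝ)..x.2, v1 (x.1, s)|
        ≤ |∫ s in (0:ℝ)..1, v1 (x.1, s)| + |∫ s in (1:ℝ)..x.2, v1 (x.1, s)| := abs_add_le _ _
      _ ≤ Real.sqrt (∫ y in UHP, gradSq v1 y)
          + Real.sqrt (Xnorm1Sq v1).toReal * Real.sqrt (Real.log x.2) :=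
        add_le_add (part1 hu hcs hsupp zero_le_one le_rfl) (part2 hu hcs hsupp hgt)

end
end
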